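/- arXiv:1301.6238 — 8 statements merged into one kernel-verified Lean document; each statement's English description precedes it below -/
import Mathlib

section
/- (Corollary 4.3.) Fix μ > 1. Let g ∈ C_2([0,T];V) be such that δg ∈ C_3^μ([0,T];V), i.e. N[δg;C_3^μ] < ∞, and let Λ(δg) ∈ C_2^μ([0,T];V) be the unique element with δ(Λ(δg)) = δg given by the sewing map. Define f : [0,T] → V by f_t := g_{0t} − (Λ(δg))_{0t}, so that (δf)_{st} = g_{st} − (Λ(δg))_{st}. Then for all 0 ≤ s < t ≤ T, f_t − f_s is the limit of Riemann sums along partitions: for every ε > 0 there exists η > 0 such that for every partition s = t_0 < t_1 < … < t_n = t of [s,t] with max_i (t_{i+1} − t_i) < η one has ‖(f_t − f_s) − Σ_{i=0}^{n−1} g_{t_i t_{i+1}}‖ < ε. -/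
/-!
Since `δL = δg`, the increments of `f` are `f_v - f_u = g_{uv} - L_{uv}`, so the Riemann sum
of `g` over a partition misses `f_t - f_s` by exactly `-∑ᵢ L_{tᵢ t_{i+1}}`. As `L` is
`μ`-Hölder with `μ > 1`, this error is at most `C · mesh^(μ-1) · (t - s)`.
-/

open Filter Topology Finset

lemma exists_pos_mul_rpow_lt {a c ε : ℝ} (ha : 0 < a) (hε : 0 < ε) :
    ∃ η > 0, c * η ^ a < ε := by
  have hlim : Tendsto (fun η : ℝ => c * η ^ a) (𝓝[>] 0) (𝓝 0) := by
    have := ((Real.continuousAt_rpow_const 0 a (Or.inr ha.le)).const_mul c).tendsto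
    simpa [Real.zero_rpow ha.ne'] using this.mono_left nhdsWithin_le_nhds
  obtain ⟨η, hηε, hη⟩ := ((hlim.eventually (gt_mem_nhds hε)).and self_mem_nhdsWithin).exists
  exact ⟨η, hη, hηε⟩

lemma sub_sub_sum_eq_neg_sum {G : Type*} [AddCommGroup G] {n : ℕ} {F a b : ℕ → G}
    (h : ∀ i < n, F (i + 1) - F i = a i - b i) :
    F n - F 0 - ∑ i ∈ range n, a i = -∑ i ∈ range n, b i := by
  rw [← sum_range_sub, ← sum_sub_distrib, ← sum_neg_distrib]
  exact sum_congr rfl fun i hi => by rw [h i (mem_range.1 hi)]; abel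

section Partition

variable {n : ℕ} {p : ℕ → ℝ}

lemma monotoneOn_Iic_of_le_succ (hp : ∀ i < n, p i ≤ p (i + 1)) : MonotoneOn p (Set.Iic n) :=
  monotoneOn_of_le_succ Set.ordConnected_Iic fun i _ _ hi => by
    rw [Order.succ_eq_add_one] at hi ⊢
    exact hp i hi

lemma mem_Icc_of_le_succ (hp : ∀ i < n, p i ≤ p (i + 1)) {i : ℕ} (hi : i ≤ n) :
    p i ∈ Set.Icc (p 0) (p n) :=
  have hmono := monotoneOn_Iic_of_le_succ hp
  ⟨hmono (Set.mem_Iic.2 n.zero_le) hi i.zero_le, hmono hi (Set.mem_Iic.2 le_rfl) hi⟩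

lemma sum_sub_rpow_le_mesh_rpow_mul {μ η : ℝ} (hμ : 1 ≤ μ) (hp : ∀ i < n, p i ≤ p (i + 1))
    (hmesh : ∀ i < n, p (i + 1) - p i ≤ η) :
    ∑ i ∈ range n, (p (i + 1) - p i) ^ μ ≤ η ^ (μ - 1) * (p n - p 0) := by
  calc ∑ i ∈ range n, (p (i + 1) - p i) ^ μ
      ≤ ∑ i ∈ range n, η ^ (μ - 1) * (p (i + 1) - p i) := sum_le_sum fun i hi => by
        have hΔ : 0 ≤ p (i + 1) - p i := sub_nonneg.2 (hp i (mem_range.1 hi))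
        calc (p (i + 1) - p i) ^ μ = (p (i + 1) - p i) ^ (μ - 1) * (p (i + 1) - p i) := by
              rw [← Real.rpow_add_one' hΔ (by linarith), sub_add_cancel]
          _ ≤ η ^ (μ - 1) * (p (i + 1) - p i) := mul_le_mul_of_nonneg_right
              (Real.rpow_le_rpow hΔ (hmesh i (mem_range.1 hi)) (by linarith)) hΔ
    _ = η ^ (μ - 1) * (p n - p 0) := by rw [← mul_sum, sum_range_sub]

lemma norm_sum_le_mul_mesh_rpow {V : Type*} [SeminormedAddCommGroup V] {L : ℝ → ℝ → V}
    {C μ η : ℝ} (hμ : 1 ≤ μ) (hC : 0 ≤ C) (hp : ∀ i < n, p i ≤ p (i + 1))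
    (hmesh : ∀ i < n, p (i + 1) - p i ≤ η)
    (hL : ∀ i < n, ‖L (p i) (p (i + 1))‖ ≤ C * (p (i + 1) - p i) ^ μ) :
    ‖∑ i ∈ range n, L (p i) (p (i + 1))‖ ≤ C * η ^ (μ - 1) * (p n - p 0) :=
  calc ‖∑ i ∈ range n, L (p i) (p (i + 1))‖
      ≤ ∑ i ∈ range n, C * (p (i + 1) - p i) ^ μ :=
        (norm_sum_le _ _).trans (sum_le_sum fun i hi => hL i (mem_range.1 hi))
    _ ≤ C * η ^ (μ - 1) * (p n - p 0) := by
        rw [← mul_sum, mul_assoc]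
        exact mul_le_mul_of_nonneg_left (sum_sub_rpow_le_mesh_rpow_mul hμ hp hmesh) hC

end Partition

lemma sub_eq_sub_of_coboundary_eq {V : Type*} [AddCommGroup V] {T u v : ℝ} {f : ℝ → V}
    {g L : ℝ → ℝ → V}
    (hdL : ∀ s u t : ℝ, 0 ≤ s → s ≤ u → u ≤ t → t ≤ T →
      L s t - L s u - L u t = g s t - g s u - g u t)
    (hf : ∀ t ∈ Set.Icc (0 : ℝ) T, f t = g 0 t - L 0 t)
    (hu : 0 ≤ u) (huv : u ≤ v) (hv : v ≤ T) :
    f v - f u = g u v - L u v := by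
  rw [hf v ⟨hu.trans huv, hv⟩, hf u ⟨hu, huv.trans hv⟩]
  calc g 0 v - L 0 v - (g 0 u - L 0 u)
      = (g 0 v - g 0 u - g u v) - (L 0 v - L 0 u - L u v) + (g u v - L u v) := by abel
    _ = g u v - L u v := by rw [hdL 0 u v le_rfl hu huv hv, sub_self, zero_add]

theorem riemann_sum_representation_general
    {V : Type*} [NormedAddCommGroup V]
    (T μ : ℝ) (hμ : 1 < μ)
    (g : ℝ → ℝ → V)
    -- `L = Λ(δg)` is the unique element of `C₂^μ` with `δL = δg`:
    (L : ℝ → ℝ → V)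
    (hL : ∃ C : ℝ, ∀ s t : ℝ, 0 ≤ s → s ≤ t → t ≤ T → ‖L s t‖ ≤ C * (t - s) ^ μ)
    (hdL : ∀ s u t : ℝ, 0 ≤ s → s ≤ u → u ≤ t → t ≤ T →
      L s t - L s u - L u t = g s t - g s u - g u t)
    -- `f_t := g_{0t} − L_{0t}`:
    (f : ℝ → V) (hf : ∀ t ∈ Set.Icc (0 : ℝ) T, f t = g 0 t - L 0 t)
    (s t : ℝ) (hs : 0 ≤ s) (hst : s < t) (ht : t ≤ T)
    (ε : ℝ) (hε : 0 < ε) :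
    ∃ η > (0 : ℝ), ∀ (n : ℕ) (p : ℕ → ℝ), 0 < n →
      p 0 = s → p n = t →
      (∀ i < n, p i < p (i + 1)) →
      (∀ i < n, p (i + 1) - p i < η) →
      ‖(f t - f s) - ∑ i ∈ Finset.range n, g (p i) (p (i + 1))‖ < ε := by
  obtain ⟨C, hC⟩ := hL
  have hC0 : 0 ≤ C := nonneg_of_mul_nonneg_left ((norm_nonneg _).trans (hC s t hs hst.le ht))
    (Real.rpow_pos_of_pos (sub_pos.2 hst) μ)
  obtain ⟨η, hη, hηε⟩ := exists_pos_mul_rpow_lt (c := C * (t - s)) (sub_pos.2 hμ) hε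
  refine ⟨η, hη, fun n p _ hp0 hpn hp hmesh => ?_⟩
  have hp' : ∀ i < n, p i ≤ p (i + 1) := fun i hi => (hp i hi).le
  have hpT : ∀ i ≤ n, p i ∈ Set.Icc 0 T := fun i hi =>
    Set.Icc_subset_Icc (hp0 ▸ hs) (hpn ▸ ht) (mem_Icc_of_le_succ hp' hi)
  have hstep : ∀ i < n, f (p (i + 1)) - f (p i) = g (p i) (p (i + 1)) - L (p i) (p (i + 1)) :=
    fun i hi => sub_eq_sub_of_coboundary_eq hdL hf (hpT i hi.le).1 (hp' i hi) (hpT (i + 1) hi).2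
  rw [← hp0, ← hpn, sub_sub_sum_eq_neg_sum (F := fun i => f (p i)) hstep, norm_neg]
  calc _ ≤ C * η ^ (μ - 1) * (p n - p 0) :=
        norm_sum_le_mul_mesh_rpow hμ.le hC0 hp' (fun i hi => (hmesh i hi).le)
          fun i hi => hC _ _ (hpT i hi.le).1 (hp' i hi) (hpT (i + 1) hi).2
    _ < ε := by rw [hp0, hpn]; linarith

/-- Corollary 4.3: Riemann-sum description of `(Id − Λδ)g`.
Fix `μ > 1`. Let `g ∈ C₂([0,T];V)` with `δg ∈ C₃^μ` (witnessed by a finite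
decomposition with Hölder bounds), and let `L = Λ(δg) ∈ C₂^μ` be the element given by
the sewing map, i.e. `δL = δg` and `‖L_{st}‖ ≤ C (t−s)^μ`. Define
`f_t := g_{0t} − L_{0t}` (so that `(δf)_{st} = g_{st} − L_{st}`). Then for all
`0 ≤ s < t ≤ T`, `f_t − f_s` is the limit of the Riemann sums `∑ᵢ g_{tᵢ t_{i+1}}`
along partitions of `[s,t]` with mesh tending to `0`. -/
theorem riemann_sum_representation
    {V : Type*} [NormedAddCommGroup V] [NormedSpace ℝ V] [CompleteSpace V]
    (T μ : ℝ) (hT : 0 < T) (hμ : 1 < μ)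
    (g : ℝ → ℝ → V)
    (hgcont : ContinuousOn (fun p : ℝ × ℝ => g p.1 p.2)
      {p : ℝ × ℝ | 0 ≤ p.1 ∧ p.1 ≤ p.2 ∧ p.2 ≤ T})
    (hgdiag : ∀ t ∈ Set.Icc (0 : ℝ) T, g t t = 0)
    -- `δg ∈ C₃^μ([0,T];V)`, i.e. `N[δg; C₃^μ] < ∞`:
    (hfin : ∃ (n : ℕ) (hs : Fin n → ℝ → ℝ → ℝ → V) (αs Cs : Fin n → ℝ),
      (∀ i, 0 < αs i ∧ αs i < μ) ∧
      (∀ s u t : ℝ, 0 ≤ s → s ≤ u → u ≤ t → t ≤ T →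
        g s t - g s u - g u t = ∑ i, hs i s u t) ∧
      (∀ i, ∀ s u t : ℝ, 0 ≤ s → s < u → u < t → t ≤ T →
        ‖hs i s u t‖ ≤ Cs i * (t - u) ^ αs i * (u - s) ^ (μ - αs i)))
    -- `L = Λ(δg)` is the unique element of `C₂^μ` with `δL = δg`:
    (L : ℝ → ℝ → V)
    (hL : ∃ C : ℝ, ∀ s t : ℝ, 0 ≤ s → s ≤ t → t ≤ T → ‖L s t‖ ≤ C * (t - s) ^ μ)
    (hdL : ∀ s u t : ℝ, 0 ≤ s → s ≤ u → u ≤ t → t ≤ T →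
      L s t - L s u - L u t = g s t - g s u - g u t)
    -- `f_t := g_{0t} − L_{0t}`:
    (f : ℝ → V) (hf : ∀ t ∈ Set.Icc (0 : ℝ) T, f t = g 0 t - L 0 t)
    (s t : ℝ) (hs : 0 ≤ s) (hst : s < t) (ht : t ≤ T)
    (ε : ℝ) (hε : 0 < ε) :
    ∃ η > (0 : ℝ), ∀ (n : ℕ) (p : ℕ → ℝ), 0 < n →
      p 0 = s → p n = t →
      (∀ i < n, p i < p (i + 1)) →
      (∀ i < n, p (i + 1) - p i < η) →
      ‖(f t - f s) - ∑ i ∈ Finset.range n, g (p i) (p (i + 1))‖ < ε :=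
  riemann_sum_representation_general T μ hμ g L hL hdL f hf s t hs hst ht ε hε
end

section
/- (Crossing-generating-function bound, used in the proofs of Proposition 3.4 and Lemma 3.7.) For every q ∈ (−1,1) and every integer p ≥ 1, one has Σ_{π ∈ P_2({1,…,2p})} |q|^{Cr(π)} ≤ (2/√(1−|q|))^{2p}. -/
open scoped BigOperators

/-- A pairing of `{1,…,n}` (with `n` even), encoded as a fixed-point-free involution of
`Fin n`: the blocks of the pairing are the orbits `{x, f x}`. -/
def IsPairing {n : ℕ} (f : Fin n → Fin n) : Prop :=
  (∀ x, f (f x) = x) ∧ ∀ x, f x ≠ x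

open scoped Classical in
/-- The set `P₂({1,…,n})` of pairings, as a finset of fixed-point-free involutions. -/
noncomputable def pairings (n : ℕ) : Finset (Fin n → Fin n) :=
  Finset.univ.filter fun f => IsPairing f

/-- The number `Cr(π)` of crossings of a pairing: the number of pairs of blocks
`{x₁,y₁}, {x₂,y₂}` with `x₁ < x₂ < y₁ < y₂`; each such crossing is counted exactly once,
as the pair `(x₁, x₂)` with `y₁ = f x₁`, `y₂ = f x₂`. -/
def crossings {n : ℕ} (f : Fin n → Fin n) : ℕ :=
  (Finset.univ.filter fun q : Fin n × Fin n =>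
    q.1 < q.2 ∧ q.2 < f q.1 ∧ f q.1 < f q.2).card

open scoped Classical in
/-- `δ(π, (i₁,…,iₙ))`: equal to `1` if `i_x = i_y` for every block `{x,y}` of the
pairing, and to `0` otherwise. -/
noncomputable def pairingDelta {n : ℕ} {k : Type*} (f : Fin n → Fin n) (i : Fin n → k) : ℕ :=
  if ∀ x, i (f x) = i x then 1 else 0


section Aux
open Finset

variable {n : ℕ}

/-- The set of "openers" (left endpoints) of a pairing. -/
def openersF (f : Fin n → Fin n) : Finset (Fin n) :=
  Finset.univ.filter fun x => x < f x

/-- Number of crossings whose closer is `y`. -/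
def jfun (f : Fin n → Fin n) (y : Fin n) : ℕ :=
  (Finset.univ.filter fun z => f y < z ∧ z < y ∧ y < f z).card

lemma jfun_le (f : Fin n → Fin n) (y : Fin n) : jfun f y ≤ n := by
  unfold jfun
  calc (Finset.univ.filter fun z => f y < z ∧ z < y ∧ y < f z).card
      ≤ (Finset.univ : Finset (Fin n)).card := Finset.card_filter_le _ _
    _ = n := by rw [Finset.card_univ, Fintype.card_fin]

lemma jfun_opener_zero {f : Fin n → Fin n} {y : Fin n} (h : y < f y) : jfun f y = 0 := by
  unfold jfun
  rw [Finset.card_eq_zero, Finset.filter_eq_empty_iff]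
  rintro z - ⟨h1, h2, -⟩
  exact absurd (h2.trans (h.trans h1)) (lt_irrefl z)

lemma crossings_eq_sum_jfun {f : Fin n → Fin n} (hf : IsPairing f) :
    crossings f = ∑ y : Fin n, jfun f y := by
  classical
  have hs : ∑ y : Fin n, jfun f y
      = (Finset.univ.sigma fun y : Fin n =>
          Finset.univ.filter fun z => f y < z ∧ z < y ∧ y < f z).card := by
    rw [Finset.card_sigma]; rfl
  rw [hs, crossings]
  refine Finset.card_bij' (fun q _ => ⟨f q.1, q.2⟩) (fun s _ => (f s.1, s.2)) ?_ ?_ ?_ ?_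
  · intro q hq
    simp only [Finset.mem_filter, Finset.mem_univ, true_and] at hq
    simp only [Finset.mem_sigma, Finset.mem_filter, Finset.mem_univ, true_and]
    exact ⟨by rw [hf.1]; exact hq.1, hq.2.1, hq.2.2⟩
  · intro s hsm
    simp only [Finset.mem_sigma, Finset.mem_filter, Finset.mem_univ, true_and] at hsm
    simp only [Finset.mem_filter, Finset.mem_univ, true_and]
    refine ⟨hsm.1, ?_, ?_⟩ <;> rw [hf.1]
    · exact hsm.2.1
    · exact hsm.2.2
  · intro q hq; simp [hf.1]
  · intro s hsm; simp [hf.1]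

lemma eq_of_card_filter_lt_eq {A : Finset (Fin n)} {a b : Fin n} (ha : a ∈ A) (hb : b ∈ A)
    (h : (A.filter fun z => a < z).card = (A.filter fun z => b < z).card) : a = b := by
  have key : ∀ {x y : Fin n}, x ∈ A → y ∈ A → x < y →
      (A.filter fun z => y < z).card < (A.filter fun z => x < z).card := by
    intro x y _ hy hxy
    apply Finset.card_lt_card
    rw [Finset.ssubset_iff_of_subset]
    · exact ⟨y, by simp [Finset.mem_filter, hy, hxy], by simp [Finset.mem_filter]⟩
    · intro z hz
      simp only [Finset.mem_filter] at hz ⊢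
      exact ⟨hz.1, hxy.trans hz.2⟩
  rcases lt_trichotomy a b with hab | hab | hab
  · exact absurd h (key ha hb hab).ne'
  · exact hab
  · exact absurd h (key hb ha hab).ne

/-- A pairing is determined by its opener set and its crossing-count function. -/
lemma pairing_ext {f g : Fin n → Fin n} (hf : IsPairing f) (hg : IsPairing g)
    (hO : openersF f = openersF g) (hj : jfun f = jfun g) : f = g := by
  classical
  have hopen : ∀ y : Fin n, y < f y ↔ y < g y := by
    intro y
    have := Finset.ext_iff.mp hO y
    simpa [openersF] using this
  have hcFG : ∀ y : Fin n, f y < y → g y < y := by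
    intro y h
    rcases (hg.2 y).lt_or_gt with h' | h'
    · exact h'
    · exact absurd ((hopen y).mpr h') (asymm h)
  have hcGF : ∀ y : Fin n, g y < y → f y < y := by
    intro y h
    rcases (hf.2 y).lt_or_gt with h' | h'
    · exact h'
    · exact absurd ((hopen y).mp h') (asymm h)
  have Hc : ∀ m : ℕ, ∀ y : Fin n, (y : ℕ) = m → f y < y → f y = g y := by
    intro m
    induction m using Nat.strong_induction_on with
    | _ m ih =>
      intro y hym hfy
      have IH : ∀ z : Fin n, z < y → f z < z → f z = g z := by
        intro z hz hfz
        exact ih (z : ℕ) (by rw [← hym]; exact hz) z rfl hfz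
      set A : Finset (Fin n) := Finset.univ.filter fun x => x < y ∧ x < f x ∧ y ≤ f x with hA
      have hAg : A = Finset.univ.filter fun x => x < y ∧ x < g x ∧ y ≤ g x := by
        ext x
        simp only [hA, Finset.mem_filter, Finset.mem_univ, true_and]
        constructor
        · rintro ⟨hxy, hxf, hyf⟩
          refine ⟨hxy, (hopen x).mp hxf, ?_⟩
          by_contra hlt
          push_neg at hlt
          have hgx : x < g x := (hopen x).mp hxf
          have hgz : g (g x) < g x := by rw [hg.1]; exact hgx
          have hfz : f (g x) < g x := hcGF (g x) hgz
          have heq : f (g x) = g (g x) := IH (g x) hlt hfz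
          have hfgx : f (g x) = x := by rw [heq, hg.1]
          have hfxgx : f x = g x := by
            have h2 := congrArg f hfgx
            rw [hf.1] at h2; exact h2.symm
          rw [hfxgx] at hyf
          exact absurd hyf (not_le.mpr hlt)
        · rintro ⟨hxy, hxg, hyg⟩
          refine ⟨hxy, (hopen x).mpr hxg, ?_⟩
          by_contra hlt
          push_neg at hlt
          have hfx : x < f x := (hopen x).mpr hxg
          have hfz : f (f x) < f x := by rw [hf.1]; exact hfx
          have heq : f (f x) = g (f x) := IH (f x) hlt hfz
          have hgfx : g (f x) = x := by rw [← heq, hf.1]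
          have hgxfx : g x = f x := by
            have h2 := congrArg g hgfx
            rw [hg.1] at h2; exact h2.symm
          rw [hgxfx] at hyg
          exact absurd hyg (not_le.mpr hlt)
      have hfyA : f y ∈ A := by
        simp only [hA, Finset.mem_filter, Finset.mem_univ, true_and]
        refine ⟨hfy, ?_, ?_⟩
        · rw [hf.1]; exact hfy
        · exact (hf.1 y).ge
      have hgy : g y < y := hcFG y hfy
      have hgyA : g y ∈ A := by
        rw [hAg]
        simp only [Finset.mem_filter, Finset.mem_univ, true_and]
        refine ⟨hgy, ?_, ?_⟩
        · rw [hg.1]; exact hgy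
        · exact (hg.1 y).ge
      have hjf : jfun f y = (A.filter fun z => f y < z).card := by
        unfold jfun
        congr 1
        ext z
        simp only [hA, Finset.mem_filter, Finset.mem_univ, true_and]
        constructor
        · rintro ⟨h1, h2, h3⟩
          exact ⟨⟨h2, h2.trans h3, h3.le⟩, h1⟩
        · rintro ⟨⟨hzy, _, hyf⟩, hfyz⟩
          refine ⟨hfyz, hzy, lt_of_le_of_ne hyf ?_⟩
          intro he
          have : f y = z := by rw [he, hf.1]
          exact absurd this hfyz.ne
      have hjg : jfun g y = (A.filter fun z => g y < z).card := by
        unfold jfun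
        congr 1
        ext z
        simp only [hAg, Finset.mem_filter, Finset.mem_univ, true_and]
        constructor
        · rintro ⟨h1, h2, h3⟩
          exact ⟨⟨h2, h2.trans h3, h3.le⟩, h1⟩
        · rintro ⟨⟨hzy, _, hyg⟩, hgyz⟩
          refine ⟨hgyz, hzy, lt_of_le_of_ne hyg ?_⟩
          intro he
          have : g y = z := by rw [he, hg.1]
          exact absurd this hgyz.ne
      have hcard : (A.filter fun z => f y < z).card = (A.filter fun z => g y < z).card := by
        rw [← hjf, ← hjg, hj]
      exact eq_of_card_filter_lt_eq hfyA hgyA hcard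
  funext y
  rcases (hf.2 y).lt_or_gt with h | h
  · exact Hc (y : ℕ) y rfl h
  · have hyg : y < g y := (hopen y).mp h
    have hcg : g (g y) < g y := by rw [hg.1]; exact hyg
    have hcf : f (g y) < g y := hcGF (g y) hcg
    have heq : f (g y) = g (g y) := Hc ((g y : Fin n) : ℕ) (g y) rfl hcf
    have h1 : f (g y) = y := by rw [heq, hg.1]
    have h2 := congrArg f h1
    rw [hf.1] at h2
    exact h2.symm

lemma card_opener_closer {f : Fin n → Fin n} (hf : IsPairing f) :
    (openersF f).card = (Finset.univ \ openersF f).card := by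
  classical
  apply Finset.card_bij (fun x _ => f x)
  · intro x hx
    simp only [openersF, Finset.mem_filter, Finset.mem_univ, true_and] at hx
    simp only [openersF, Finset.mem_sdiff, Finset.mem_univ, true_and, Finset.mem_filter,
      not_and, not_lt]
    rw [hf.1]
    exact hx.le
  · intro x hx y hy hxy
    have := congrArg f hxy
    rwa [hf.1, hf.1] at this
  · intro b hb
    simp only [openersF, Finset.mem_sdiff, Finset.mem_univ, true_and, Finset.mem_filter,
      not_and, not_lt] at hb
    have hfb : f b < b := lt_of_le_of_ne hb (hf.2 b)
    refine ⟨f b, ?_, hf.1 b⟩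
    simp only [openersF, Finset.mem_filter, Finset.mem_univ, true_and]
    rw [hf.1]
    exact hfb

end Aux

set_option maxHeartbeats 2000000 in
/-- crossing-generating-function bound. For every `q ∈ (−1,1)` and
every integer `p ≥ 1`, `∑_{π ∈ P₂({1,…,2p})} |q|^{Cr(π)} ≤ (2/√(1−|q|))^{2p}`. -/
theorem crossing_generating_function_bound
    (q : ℝ) (hq₁ : -1 < q) (hq₂ : q < 1) (p : ℕ) (hp : 1 ≤ p) :
    ∑ f ∈ pairings (2 * p), |q| ^ crossings f
      ≤ (2 / Real.sqrt (1 - |q|)) ^ (2 * p) := by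
  classical
  set t := |q| with ht
  have ht0 : 0 ≤ t := abs_nonneg q
  have ht1 : t < 1 := abs_lt.mpr ⟨hq₁, hq₂⟩
  have h1t : 0 < 1 - t := by linarith
  set n := 2 * p with hn
  -- geometric series bound
  have geo : ∀ m : ℕ, ∑ j ∈ Finset.range m, t ^ j ≤ (1 - t)⁻¹ := by
    intro m
    have key : (∑ j ∈ Finset.range m, t ^ j) * (1 - t) = 1 - t ^ m := by
      have h := geom_sum_mul t m
      linear_combination -h
    have hkey : (∑ j ∈ Finset.range m, t ^ j) * (1 - t) ≤ 1 := by
      have : 0 ≤ t ^ m := pow_nonneg ht0 m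
      linarith [key]
    calc ∑ j ∈ Finset.range m, t ^ j
        = (∑ j ∈ Finset.range m, t ^ j) * (1 - t) * (1 - t)⁻¹ := by
          field_simp
      _ ≤ 1 * (1 - t)⁻¹ := by
          apply mul_le_mul_of_nonneg_right hkey (inv_nonneg.mpr h1t.le)
      _ = (1 - t)⁻¹ := one_mul _
  have geonn : (0:ℝ) ≤ ∑ j ∈ Finset.range (n+1), t ^ j := by positivity
  -- fiber over opener sets
  have hfib : ∑ f ∈ pairings n, t ^ crossings f
      = ∑ O ∈ (Finset.univ : Finset (Fin n)).powerset,
          ∑ f ∈ (pairings n).filter (fun f => openersF f = O), t ^ crossings f :=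
    (Finset.sum_fiberwise_of_maps_to
      (fun f _ => Finset.mem_powerset.mpr (Finset.subset_univ _)) _).symm
  have hinner : ∀ O ∈ (Finset.univ : Finset (Fin n)).powerset,
      ∑ f ∈ (pairings n).filter (fun f => openersF f = O), t ^ crossings f
        ≤ ((1 - t)⁻¹) ^ p := by
    intro O _
    by_cases hne : ((pairings n).filter fun f => openersF f = O).Nonempty
    · obtain ⟨f₀, hf₀⟩ := hne
      have hf₀p : IsPairing f₀ := by
        have := (Finset.mem_filter.mp hf₀).1
        exact (Finset.mem_filter.mp this).2
      have hf₀O : openersF f₀ = O := (Finset.mem_filter.mp hf₀).2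
      have hcardC : (Finset.univ \ O).card = p := by
        have h1 := card_opener_closer hf₀p
        rw [hf₀O] at h1
        have h2 : (Finset.univ \ O).card = n - O.card := by
          rw [Finset.card_sdiff_of_subset (Finset.subset_univ O), Finset.card_univ, Fintype.card_fin]
        have h3 : O.card ≤ n := by
          calc O.card ≤ (Finset.univ : Finset (Fin n)).card := Finset.card_le_univ O
            _ = n := by rw [Finset.card_univ, Fintype.card_fin]
        omega
      have hpair : ∀ f ∈ (pairings n).filter (fun f => openersF f = O), IsPairing f := by
        intro f hfm
        have := (Finset.mem_filter.mp hfm).1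
        exact (Finset.mem_filter.mp this).2
      have hterm : ∀ f ∈ (pairings n).filter (fun f => openersF f = O),
          t ^ crossings f = ∏ y : Fin n, t ^ jfun f y := by
        intro f hfm
        rw [crossings_eq_sum_jfun (hpair f hfm), Finset.prod_pow_eq_pow_sum]
      rw [Finset.sum_congr rfl hterm]
      have hinj : ∀ f ∈ (pairings n).filter (fun f => openersF f = O),
          ∀ g ∈ (pairings n).filter (fun f => openersF f = O), jfun f = jfun g → f = g := by
        intro f hfm g hgm hjeq
        exact pairing_ext (hpair f hfm) (hpair g hgm)
          (by rw [(Finset.mem_filter.mp hfm).2, (Finset.mem_filter.mp hgm).2]) hjeq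
      have himg : ∑ f ∈ (pairings n).filter (fun f => openersF f = O), ∏ y : Fin n, t ^ jfun f y
          = ∑ k ∈ ((pairings n).filter (fun f => openersF f = O)).image jfun,
              ∏ y : Fin n, t ^ k y :=
        (Finset.sum_image (g := jfun) (f := fun k => ∏ y : Fin n, t ^ k y) hinj).symm
      rw [himg]
      set B := Fintype.piFinset
        (fun y : Fin n => if y ∈ O then ({0} : Finset ℕ) else Finset.range (n+1)) with hB
      have hsub : ((pairings n).filter (fun f => openersF f = O)).image jfun
          ⊆ B := by
        intro k hk
        obtain ⟨f, hfm, rfl⟩ := Finset.mem_image.mp hk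
        rw [hB, Fintype.mem_piFinset]
        intro y
        by_cases hy : y ∈ O
        · simp only [hy, if_true, Finset.mem_singleton]
          apply jfun_opener_zero
          have : y ∈ openersF f := by rw [(Finset.mem_filter.mp hfm).2]; exact hy
          simpa [openersF] using this
        · simp only [hy, if_false, Finset.mem_range]
          exact Nat.lt_succ_of_le (jfun_le f y)
      calc ∑ k ∈ ((pairings n).filter (fun f => openersF f = O)).image jfun,
              ∏ y : Fin n, t ^ k y
          ≤ ∑ k ∈ B, ∏ y : Fin n, t ^ k y := by
            apply Finset.sum_le_sum_of_subset_of_nonneg hsub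
            intro k _ _
            positivity
        _ = ∏ y : Fin n, ∑ j ∈ (if y ∈ O then ({0} : Finset ℕ) else Finset.range (n+1)),
              t ^ j := (Finset.prod_univ_sum _ _).symm
        _ = ∏ y : Fin n, (if y ∈ O then (1:ℝ) else ∑ j ∈ Finset.range (n+1), t ^ j) := by
            apply Finset.prod_congr rfl
            intro y _
            by_cases hy : y ∈ O <;> simp [hy]
        _ = (∑ j ∈ Finset.range (n+1), t ^ j) ^ p := by
            rw [Finset.prod_ite]
            rw [Finset.prod_const_one, one_mul, Finset.prod_const]
            congr 1
            rw [← hcardC]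
            congr 1
            ext x
            simp
        _ ≤ ((1 - t)⁻¹) ^ p := pow_le_pow_left₀ geonn (geo (n+1)) p
    · rw [Finset.not_nonempty_iff_eq_empty.mp hne, Finset.sum_empty]
      positivity
  calc ∑ f ∈ pairings n, t ^ crossings f
      = ∑ O ∈ (Finset.univ : Finset (Fin n)).powerset,
          ∑ f ∈ (pairings n).filter (fun f => openersF f = O), t ^ crossings f := hfib
    _ ≤ (Finset.univ : Finset (Fin n)).powerset.card • ((1 - t)⁻¹) ^ p :=
        Finset.sum_le_card_nsmul _ _ _ hinner
    _ = (2:ℝ) ^ n * ((1 - t)⁻¹) ^ p := by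
        rw [Finset.card_powerset, Finset.card_univ, Fintype.card_fin, nsmul_eq_mul]
        push_cast
        ring
    _ = (2 / Real.sqrt (1 - t)) ^ n := by
        have hs : Real.sqrt (1 - t) ^ 2 = 1 - t := Real.sq_sqrt h1t.le
        rw [hn, pow_mul, pow_mul, div_pow, hs]
        rw [← mul_pow, div_eq_mul_inv]
end

section
/- (Key estimate in the proof of Lemma 3.7, combinatorial form.) Fix integers n, p ≥ 1 and q ∈ (−1,1). Then Σ_{(i_1,…,i_{2p}) ∈ {0,…,n−1}^{2p}} ( Σ_{π ∈ P_2({1,…,2p})} q^{Cr(π)} · δ(π,(i_1,…,i_{2p})) )^2 ≤ n^p · (4/(1−|q|))^{2p}. -/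
open scoped BigOperators

/-!
Expanding the square and using `δ ≤ 1`, the left-hand side is at most
`(∑_π |q|^Cr(π))² · max_π #{i | δ(π, i) = 1} = (∑_π |q|^Cr(π))² · n^p`.
A pairing is determined by its set of openers (a `p`-subset of `{1,…,2p}`, so at most
`C(2p, p) ≤ 4^p` choices) together with, for each closer `y`, the number `c_y < 2p` of blocks
that open inside the block closed at `y` and close after `y`. Since `Cr(π) = ∑_y c_y`, this
gives `∑_π |q|^Cr(π) ≤ 4^p (∑_{c < 2p} |q|^c)^p ≤ (4 / (1 - |q|))^p`.
-/

open Finset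

lemma Finset.eq_of_card_filter_lt_eq {α : Type*} [LinearOrder α] {s : Finset α} {a b : α}
    (ha : a ∈ s) (hb : b ∈ s) (h : #{x ∈ s | a < x} = #{x ∈ s | b < x}) : a = b := by
  have hstrict : ∀ {a b}, b ∈ s → a < b → #{x ∈ s | b < x} < #{x ∈ s | a < x} := fun hb hab =>
    card_lt_card ⟨monotone_filter_right _ fun _ _ => hab.trans,
      fun hsub => (mem_filter.1 (hsub (mem_filter.2 ⟨hb, hab⟩))).2.false⟩
  rcases lt_trichotomy a b with hab | rfl | hab
  · exact absurd h (hstrict hb hab).ne'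
  · rfl
  · exact absurd h (hstrict ha hab).ne

section Pairings

variable {N : ℕ} {f g : Fin N → Fin N}

lemma mem_pairings : f ∈ pairings N ↔ IsPairing f := by
  simp [pairings]

lemma IsPairing.lt_of_not_lt (hf : IsPairing f) {y : Fin N} (h : ¬ y < f y) : f y < y :=
  (not_lt.1 h).lt_of_ne (hf.2 y)

def openers (f : Fin N → Fin N) : Finset (Fin N) := {y | y < f y}

lemma IsPairing.two_mul_card_openers (hf : IsPairing f) : 2 * #(openers f) = N := by
  have hclosers : #{y | ¬ y < f y} = #(openers f) := by
    refine card_nbij' f f (fun y hy => ?_) (fun y hy => ?_) (fun y _ => hf.1 y)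
      (fun y _ => hf.1 y)
    · simp only [coe_filter, mem_univ, true_and, Set.mem_ofPred_eq, openers, hf.1] at hy ⊢
      exact hf.lt_of_not_lt hy
    · simp only [coe_filter, mem_univ, true_and, Set.mem_ofPred_eq, openers, hf.1] at hy ⊢
      exact hy.asymm
  have := card_filter_add_card_filter_not (s := (univ : Finset (Fin N))) (fun y => y < f y)
  rw [card_univ, Fintype.card_fin, hclosers] at this
  change #(openers f) + #(openers f) = N at this
  omega

def crossingsAt (f : Fin N → Fin N) (y : Fin N) : ℕ := #{x | f y < x ∧ x < y ∧ y < f x}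

lemma crossingsAt_lt (f : Fin N → Fin N) (y : Fin N) : crossingsAt f y < N :=
  (card_lt_card (filter_ssubset.2 ⟨y, mem_univ y, fun h => h.2.1.false⟩)).trans_eq
    (card_fin N)

lemma crossingsAt_eq_zero_of_lt {y : Fin N} (hy : y < f y) : crossingsAt f y = 0 :=
  card_eq_zero.2 <| filter_false_of_mem fun _ _ h => (h.1.trans h.2.1).not_gt hy

lemma crossingsAt_mem_piFinset (f : Fin N → Fin N) :
    crossingsAt f ∈ Fintype.piFinset fun y => if y ∈ openers f then {0} else range N := by
  refine Fintype.mem_piFinset.2 fun y => ?_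
  split_ifs with hy
  · exact mem_singleton.2 (crossingsAt_eq_zero_of_lt (mem_filter.1 hy).2)
  · exact mem_range.2 (crossingsAt_lt f y)

lemma IsPairing.crossings_eq_sum_crossingsAt (hf : IsPairing f) :
    crossings f = ∑ y, crossingsAt f y := by
  rw [crossings, card_filter, Fintype.sum_prod_type]
  refine Fintype.sum_bijective f (Function.Involutive.bijective hf.1) _ _ fun x => ?_
  simp only [crossingsAt, card_filter, hf.1]

def openAt (f : Fin N → Fin N) (y : Fin N) : Finset (Fin N) := {x | x < y ∧ y ≤ f x}

lemma IsPairing.mem_openAt (hf : IsPairing f) {y : Fin N} (hy : f y < y) :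
    f y ∈ openAt f y := by
  simp [openAt, hy, hf.1 y]

lemma IsPairing.crossingsAt_eq_card_openAt (hf : IsPairing f) {y : Fin N} (hy : f y < y) :
    crossingsAt f y = #{x ∈ openAt f y | f y < x} := by
  rw [crossingsAt, openAt, filter_filter]
  congr 1
  ext x
  simp only [mem_filter, mem_univ, true_and]
  refine ⟨fun ⟨h₁, h₂, h₃⟩ => ⟨⟨h₂, h₃.le⟩, h₁⟩, fun ⟨⟨h₂, h₃⟩, h₁⟩ => ⟨h₁, h₂, h₃.lt_of_ne ?_⟩⟩
  rintro rfl
  exact h₁.ne (by rw [hf.1])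

lemma IsPairing.le_of_le_of_eqOn_closers (hf : IsPairing f) (hg : IsPairing g)
    (ho : ∀ z, z < f z ↔ z < g z) {y : Fin N} (IH : ∀ z < y, f z < z → f z = g z)
    {x : Fin N} (hx : x < y) (hfx : y ≤ f x) : y ≤ g x := by
  by_contra! hgx
  have hxg : x < g x := (ho x).1 (hx.trans_le hfx)
  have hgx_closer : f (g x) < g x := hf.lt_of_not_lt <| by rw [ho, hg.1]; exact hxg.asymm
  have hfgx : f (g x) = x := by rw [IH _ hgx hgx_closer, hg.1]
  have : f x = g x := by rw [← hf.1 (g x), hfgx]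
  exact (this ▸ hfx).not_gt hgx

lemma IsPairing.openAt_eq (hf : IsPairing f) (hg : IsPairing g) (ho : ∀ z, z < f z ↔ z < g z)
    {y : Fin N} (IH : ∀ z < y, f z < z → f z = g z) : openAt f y = openAt g y := by
  have IH' : ∀ z < y, g z < z → g z = f z := fun z hz hgz =>
    (IH z hz (hf.lt_of_not_lt ((ho z).not.2 hgz.asymm))).symm
  ext x
  simp only [openAt, mem_filter, mem_univ, true_and]
  exact ⟨fun ⟨hx, hfx⟩ => ⟨hx, hf.le_of_le_of_eqOn_closers hg ho IH hx hfx⟩,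
    fun ⟨hx, hgx⟩ => ⟨hx, hg.le_of_le_of_eqOn_closers hf (fun z => (ho z).symm) IH' hx hgx⟩⟩

/-- A pairing is determined by its openers and its crossing counts: by induction on the
closer `y`, both pairings have the same blocks open at `y`, and `f y` is the open block
whose rank among them is given by `crossingsAt f y`. -/
lemma IsPairing.eq_of_openers_eq_of_crossingsAt_eq (hf : IsPairing f) (hg : IsPairing g)
    (ho : openers f = openers g) (hc : crossingsAt f = crossingsAt g) : f = g := by
  have ho' : ∀ z, z < f z ↔ z < g z := by simpa [openers, Finset.ext_iff] using ho
  have hclosers : ∀ y, f y < y → f y = g y := by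
    intro y
    induction y using WellFoundedLT.induction with
    | _ y IH =>
      intro hy
      have hgy : g y < y := hg.lt_of_not_lt ((ho' y).not.1 hy.asymm)
      have hO := hf.openAt_eq hg ho' IH
      refine Finset.eq_of_card_filter_lt_eq (hf.mem_openAt hy) (hO ▸ hg.mem_openAt hgy) ?_
      rw [← hf.crossingsAt_eq_card_openAt hy, hO, ← hg.crossingsAt_eq_card_openAt hgy, hc]
  funext y
  rcases (hf.2 y).lt_or_gt with hy | hy
  · exact hclosers y hy
  · have h := hclosers (f y) (by rwa [hf.1])
    rw [hf.1] at h
    rw [← hg.1 (f y), ← h]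

end Pairings

lemma sum_pow_crossings_le_centralBinom_mul (p : ℕ) {t : ℝ} (ht : 0 ≤ t) :
    ∑ f ∈ pairings (2 * p), t ^ crossings f
      ≤ p.centralBinom * (∑ v ∈ range (2 * p), t ^ v) ^ p := by
  set Φ : (Fin (2 * p) → Fin (2 * p)) → (Σ _ : Finset (Fin (2 * p)), Fin (2 * p) → ℕ) :=
    fun f => ⟨openers f, crossingsAt f⟩
  set T := (powersetCard p (univ : Finset (Fin (2 * p)))).sigma fun s =>
    Fintype.piFinset fun y => if y ∈ s then {0} else range (2 * p)
  have hinj : Set.InjOn Φ (pairings (2 * p)) := fun f hf g hg hfg => by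
    simp only [Φ, Sigma.mk.inj_iff, heq_iff_eq] at hfg
    exact (mem_pairings.1 hf).eq_of_openers_eq_of_crossingsAt_eq (mem_pairings.1 hg) hfg.1 hfg.2
  have hmaps : (pairings (2 * p)).image Φ ⊆ T := by
    simp only [subset_iff, mem_image, forall_exists_index, and_imp, forall_apply_eq_imp_iff₂]
    intro f hf
    have hf := mem_pairings.1 hf
    refine mem_sigma.2 ⟨mem_powersetCard.2 ⟨subset_univ _, ?_⟩, crossingsAt_mem_piFinset f⟩
    have := hf.two_mul_card_openers
    change #(openers f) = p
    omega
  calc ∑ f ∈ pairings (2 * p), t ^ crossings f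
      = ∑ f ∈ pairings (2 * p), ∏ y, t ^ (Φ f).2 y := sum_congr rfl fun f hf => by
        rw [(mem_pairings.1 hf).crossings_eq_sum_crossingsAt, prod_pow_eq_pow_sum]
    _ = ∑ c ∈ (pairings (2 * p)).image Φ, ∏ y, t ^ c.2 y :=
        (sum_image (f := fun c => ∏ y, t ^ c.2 y) hinj).symm
    _ ≤ ∑ c ∈ T, ∏ y, t ^ c.2 y :=
        sum_le_sum_of_subset_of_nonneg hmaps fun _ _ _ => by positivity
    _ = ∑ s ∈ powersetCard p univ,
          ∏ y : Fin (2 * p), ∑ v ∈ (if y ∈ s then {0} else range (2 * p)), t ^ v := by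
        rw [sum_sigma]
        exact sum_congr rfl fun s _ => (prod_univ_sum _ _).symm
    _ = ∑ _s ∈ powersetCard p (univ : Finset (Fin (2 * p))),
          (∑ v ∈ range (2 * p), t ^ v) ^ p := by
        refine sum_congr rfl fun s hs => ?_
        rw [mem_powersetCard] at hs
        simp only [apply_ite (fun u => ∑ v ∈ u, t ^ v), sum_singleton, pow_zero, prod_ite,
          prod_const_one, one_mul, prod_const, filter_not, subset_univ, filter_mem_eq_of_subset,
          card_sdiff, card_univ, Fintype.card_fin, inter_univ, hs.2]
        rw [two_mul, Nat.add_sub_cancel]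
    _ = p.centralBinom * (∑ v ∈ range (2 * p), t ^ v) ^ p := by
        rw [sum_const, card_powersetCard, card_univ, Fintype.card_fin,
          Nat.centralBinom_eq_two_mul_choose, nsmul_eq_mul]

lemma sum_pow_crossings_le (p : ℕ) {t : ℝ} (ht₀ : 0 ≤ t) (ht₁ : t < 1) :
    ∑ f ∈ pairings (2 * p), t ^ crossings f ≤ (4 / (1 - t)) ^ p := by
  have hgeom : ∑ v ∈ range (2 * p), t ^ v ≤ 1 / (1 - t) := by
    have := geom_sum_Ico_le_of_lt_one (m := 0) (n := 2 * p) ht₀ ht₁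
    rwa [← range_eq_Ico, pow_zero] at this
  calc ∑ f ∈ pairings (2 * p), t ^ crossings f
      ≤ p.centralBinom * (∑ v ∈ range (2 * p), t ^ v) ^ p :=
        sum_pow_crossings_le_centralBinom_mul p ht₀
    _ ≤ 4 ^ p * (1 / (1 - t)) ^ p := by
        gcongr
        exact_mod_cast p.centralBinom_le_four_pow
    _ = (4 / (1 - t)) ^ p := by rw [← mul_pow, mul_one_div]

lemma pairingDelta_le_one {N : ℕ} {k : Type*} (f : Fin N → Fin N) (i : Fin N → k) :
    pairingDelta f i ≤ 1 := by
  unfold pairingDelta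
  split_ifs <;> simp

lemma IsPairing.card_filter_comp_eq_self_le {N : ℕ} {f : Fin N → Fin N} {k : Type*}
    [Fintype k] [DecidableEq k] (hf : IsPairing f) :
    #{i : Fin N → k | ∀ x, i (f x) = i x} ≤ Fintype.card k ^ #(openers f) := by
  calc #{i : Fin N → k | ∀ x, i (f x) = i x}
      ≤ #(univ : Finset (openers f → k)) := by
        refine card_le_card_of_injOn (fun (i : Fin N → k) (y : openers f) => i y)
          (fun _ _ => mem_coe.2 (mem_univ _)) ?_
        intro i hi j hj hij
        simp only [coe_filter, mem_univ, true_and, Set.mem_ofPred_eq] at hi hj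
        funext y
        rcases (hf.2 y).lt_or_gt with hy | hy
        · have hfy : f y ∈ openers f := by simpa [openers, hf.1] using hy
          rw [← hi y, ← hj y]
          exact congrFun hij ⟨f y, hfy⟩
        · exact congrFun hij ⟨y, by simpa [openers] using hy⟩
    _ = Fintype.card k ^ #(openers f) := by simp

lemma IsPairing.sum_pairingDelta_le {p : ℕ} {f : Fin (2 * p) → Fin (2 * p)} {k : Type*}
    [Fintype k] (hf : IsPairing f) :
    ∑ i : Fin (2 * p) → k, (pairingDelta f i : ℝ) ≤ (Fintype.card k : ℝ) ^ p := by
  classical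
  have hp : #(openers f) = p := by have := hf.two_mul_card_openers; omega
  calc ∑ i : Fin (2 * p) → k, (pairingDelta f i : ℝ)
      = #{i : Fin (2 * p) → k | ∀ x, i (f x) = i x} := by
        rw [natCast_card_filter]
        simp only [pairingDelta, Nat.cast_ite, Nat.cast_one, Nat.cast_zero]
    _ ≤ (Fintype.card k : ℝ) ^ #(openers f) := by
        exact_mod_cast hf.card_filter_comp_eq_self_le (k := k)
    _ = (Fintype.card k : ℝ) ^ p := by rw [hp]

lemma sum_sq_sum_mul_le {ι κ : Type*} (s : Finset ι) (u : Finset κ) (a : ι → ℝ)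
    (δ : ι → κ → ℝ) (hδ₀ : ∀ f i, 0 ≤ δ f i) (hδ₁ : ∀ f i, δ f i ≤ 1) {M : ℝ}
    (hM : ∀ f ∈ s, ∑ i ∈ u, δ f i ≤ M) :
    ∑ i ∈ u, (∑ f ∈ s, a f * δ f i) ^ 2 ≤ (∑ f ∈ s, |a f|) ^ 2 * M := by
  set A := ∑ f ∈ s, |a f|
  have hpoint : ∀ i, (∑ f ∈ s, a f * δ f i) ^ 2 ≤ A * ∑ f ∈ s, |a f| * δ f i := by
    intro i
    have habs : |∑ f ∈ s, a f * δ f i| ≤ ∑ f ∈ s, |a f| * δ f i :=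
      (abs_sum_le_sum_abs _ _).trans_eq <| sum_congr rfl fun f _ => by
        rw [abs_mul, abs_of_nonneg (hδ₀ f i)]
    have hle : ∑ f ∈ s, |a f| * δ f i ≤ A :=
      sum_le_sum fun f _ => mul_le_of_le_one_right (abs_nonneg _) (hδ₁ f i)
    calc (∑ f ∈ s, a f * δ f i) ^ 2 = |∑ f ∈ s, a f * δ f i| ^ 2 := (sq_abs _).symm
      _ ≤ (∑ f ∈ s, |a f| * δ f i) ^ 2 := pow_le_pow_left₀ (abs_nonneg _) habs 2
      _ ≤ A * ∑ f ∈ s, |a f| * δ f i := by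
        rw [sq]
        exact mul_le_mul_of_nonneg_right hle ((abs_nonneg _).trans habs)
  calc ∑ i ∈ u, (∑ f ∈ s, a f * δ f i) ^ 2
      ≤ ∑ i ∈ u, A * ∑ f ∈ s, |a f| * δ f i := sum_le_sum fun i _ => hpoint i
    _ = A * ∑ f ∈ s, |a f| * ∑ i ∈ u, δ f i := by
        rw [← mul_sum, sum_comm]
        simp only [mul_sum]
    _ ≤ A * ∑ f ∈ s, |a f| * M := by
        gcongr with f hf
        exact hM f hf
    _ = A ^ 2 * M := by rw [← sum_mul, sq, mul_assoc]

theorem key_estimate_lemma_3_7_general (n p : ℕ)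
    (q : ℝ) (hq₁ : -1 < q) (hq₂ : q < 1) :
    ∑ i : Fin (2 * p) → Fin n,
        (∑ f ∈ pairings (2 * p), q ^ crossings f * (pairingDelta f i : ℝ)) ^ 2
      ≤ (n : ℝ) ^ p * (4 / (1 - |q|)) ^ (2 * p) := by
  have hq : |q| < 1 := abs_lt.2 ⟨hq₁, hq₂⟩
  calc ∑ i : Fin (2 * p) → Fin n,
        (∑ f ∈ pairings (2 * p), q ^ crossings f * (pairingDelta f i : ℝ)) ^ 2
      ≤ (∑ f ∈ pairings (2 * p), |q| ^ crossings f) ^ 2 * (n : ℝ) ^ p := by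
        simp only [← abs_pow]
        refine sum_sq_sum_mul_le _ _ _ _ (fun _ _ => Nat.cast_nonneg _)
          (fun f i => by exact_mod_cast pairingDelta_le_one f i) fun f hf => ?_
        simpa using (mem_pairings.1 hf).sum_pairingDelta_le (k := Fin n)
    _ ≤ ((4 / (1 - |q|)) ^ p) ^ 2 * (n : ℝ) ^ p := by
        gcongr
        exact sum_pow_crossings_le p (abs_nonneg q) hq
    _ = (n : ℝ) ^ p * (4 / (1 - |q|)) ^ (2 * p) := by ring

/-- key estimate in the proof of Lemma 3.7, combinatorial form.
For all integers `n, p ≥ 1` and `q ∈ (−1,1)`,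
`∑_{(i₁,…,i_{2p}) ∈ {0,…,n−1}^{2p}}
   (∑_{π ∈ P₂({1,…,2p})} q^{Cr(π)} δ(π,(i₁,…,i_{2p})))² ≤ n^p (4/(1−|q|))^{2p}`. -/
theorem key_estimate_lemma_3_7 (n p : ℕ) (hn : 1 ≤ n) (hp : 1 ≤ p)
    (q : ℝ) (hq₁ : -1 < q) (hq₂ : q < 1) :
    ∑ i : Fin (2 * p) → Fin n,
        (∑ f ∈ pairings (2 * p), q ^ crossings f * (pairingDelta f i : ℝ)) ^ 2
      ≤ (n : ℝ) ^ p * (4 / (1 - |q|)) ^ (2 * p) :=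
  key_estimate_lemma_3_7_general n p q hq₁ hq₂
end

section
/- (Weighted combinatorial core of the Burkholder–Gundy inequality, Proposition 3.4.) Fix integers p, k ≥ 1, a real number q ∈ (−1,1), and nonnegative reals c_0, …, c_{k−1}. Then Σ_{(i_1,…,i_{2p}) ∈ {0,…,k−1}^{2p}} ( ∏_{j=1}^{2p} √(c_{i_j}) ) · Σ_{π ∈ P_2({1,…,2p})} |q|^{Cr(π)} · δ(π,(i_1,…,i_{2p})) ≤ (2/√(1−|q|))^{2p} · (Σ_{l=0}^{k−1} c_l)^p. -/
open scoped BigOperators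

namespace BGCore

variable {n : ℕ}

def openers (f : Fin n → Fin n) : Finset (Fin n) :=
  Finset.univ.filter fun x => x < f x

def jcount (f : Fin n → Fin n) (y : Fin n) : ℕ :=
  (Finset.univ.filter fun x => f y < x ∧ x < y ∧ y < f x).card

lemma mem_openers {f : Fin n → Fin n} {x : Fin n} : x ∈ openers f ↔ x < f x := by
  simp [openers]

lemma finj {f : Fin n → Fin n} (hf : ∀ x, f (f x) = x) : Function.Injective f :=
  fun a b h => by rw [← hf a, h, hf b]

lemma closer_lt {f : Fin n → Fin n} (hf : IsPairing f) {y : Fin n}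
    (hy : y ∉ openers f) : f y < y := by
  rcases lt_trichotomy (f y) y with h | h | h
  · exact h
  · exact absurd h (hf.2 y)
  · exact absurd (mem_openers.2 h) hy

lemma opener_not_opener {f : Fin n → Fin n} (hf : IsPairing f) {x : Fin n}
    (hx : x ∈ openers f) : f x ∉ openers f := by
  rw [mem_openers] at hx ⊢
  rw [hf.1 x]
  exact not_lt.2 hx.le

lemma closer_opener {f : Fin n → Fin n} (hf : IsPairing f) {y : Fin n}
    (hy : y ∉ openers f) : f y ∈ openers f := by
  rw [mem_openers, hf.1 y]
  exact closer_lt hf hy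

lemma image_openers {f : Fin n → Fin n} (hf : IsPairing f) :
    (openers f).image f = (openers f)ᶜ := by
  ext y
  simp only [Finset.mem_image, Finset.mem_compl]
  constructor
  · rintro ⟨x, hx, rfl⟩
    exact opener_not_opener hf hx
  · intro hy
    exact ⟨f y, closer_opener hf hy, hf.1 y⟩

lemma card_openers {p : ℕ} {f : Fin (2 * p) → Fin (2 * p)} (hf : IsPairing f) :
    (openers f).card = p := by
  have h1 := Finset.card_add_card_compl (openers f)
  rw [← image_openers hf, Finset.card_image_of_injective _ (finj hf.1)] at h1
  simp only [Fintype.card_fin] at h1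
  omega

lemma jcount_lt {f : Fin n → Fin n} (hn : 0 < n) (y : Fin n) : jcount f y < n := by
  rw [jcount]
  have h : (Finset.univ.filter fun x => f y < x ∧ x < y ∧ y < f x) ⊆ Finset.univ.erase y := by
    intro x hx
    simp only [Finset.mem_filter] at hx
    exact Finset.mem_erase.2 ⟨fun h => absurd (h ▸ hx.2.2.1) (lt_irrefl y), Finset.mem_univ x⟩
  have := Finset.card_le_card h
  rw [Finset.card_erase_of_mem (Finset.mem_univ y)] at this
  simp only [Finset.card_univ, Fintype.card_fin] at this
  omega

lemma crossings_eq_sum {f : Fin n → Fin n} (hf : IsPairing f) :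
    crossings f = ∑ y ∈ (openers f)ᶜ, jcount f y := by
  rw [crossings]
  rw [show (∑ y ∈ (openers f)ᶜ, jcount f y) =
      ((openers f)ᶜ.sigma fun y => Finset.univ.filter fun x => f y < x ∧ x < y ∧ y < f x).card
    from (Finset.card_sigma _ _).symm]
  refine Finset.card_bij' (fun q _ => ⟨f q.1, q.2⟩) (fun σ _ => (f σ.1, σ.2)) ?_ ?_ ?_ ?_
  · rintro ⟨x1, x2⟩ hq
    simp only [Finset.mem_filter, Finset.mem_univ, true_and] at hq
    obtain ⟨h1, h2, h3⟩ := hq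
    simp only [Finset.mem_sigma, Finset.mem_filter, Finset.mem_univ, true_and, Finset.mem_compl,
      mem_openers]
    refine ⟨?_, ?_, h2, h3⟩
    · rw [hf.1]
      exact not_lt.2 (lt_trans h1 h2).le
    · rw [hf.1]; exact h1
  · rintro ⟨y, x⟩ hσ
    simp only [Finset.mem_sigma, Finset.mem_filter, Finset.mem_univ, true_and,
      Finset.mem_compl] at hσ
    obtain ⟨_, h1, h2, h3⟩ := hσ
    simp only [Finset.mem_filter, Finset.mem_univ, true_and, hf.1]
    exact ⟨h1, h2, h3⟩
  · rintro ⟨x1, x2⟩ hq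
    simp [hf.1]
  · rintro ⟨y, x⟩ hσ
    simp [hf.1]



lemma stillopen_mono {f g : Fin n → Fin n} (hf : IsPairing f) (hg : IsPairing g)
    (hO : openers f = openers g) {y : Fin n}
    (IH : ∀ z, z < y → z ∉ openers f → f z = g z)
    {x : Fin n} (hxy : x < y) (hfx : y ≤ f x) : y ≤ g x := by
  by_contra h
  push_neg at h
  have hxO : x ∈ openers f := mem_openers.2 (lt_of_lt_of_le hxy hfx)
  have hxg : x < g x := mem_openers.1 (hO ▸ hxO)
  have hgxO : g x ∉ openers f := by
    rw [hO]; exact opener_not_opener hg (hO ▸ hxO)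
  have hfgx : f (g x) = g (g x) := IH (g x) h hgxO
  rw [hg.1 x] at hfgx
  have : f x = g x := by
    apply finj hf.1
    rw [hfgx, hf.1]
  rw [this] at hfx
  exact absurd h (not_lt.2 hfx)

lemma key_step {f g : Fin n → Fin n} (hf : IsPairing f) (hg : IsPairing g)
    (hO : openers f = openers g) {y : Fin n} (hy : y ∉ openers f)
    (IH : ∀ z, z < y → z ∉ openers f → f z = g z)
    (hJ : jcount f y = jcount g y) (hab : f y < g y) : False := by
  classical
  set S : Finset (Fin n) := Finset.univ.filter fun x => x < y ∧ y ≤ f x with hS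
  have IH' : ∀ z, z < y → z ∉ openers g → g z = f z := fun z h1 h2 =>
    (IH z h1 (hO ▸ h2)).symm
  have hSg : S = Finset.univ.filter fun x => x < y ∧ y ≤ g x := by
    ext x
    simp only [hS, Finset.mem_filter, Finset.mem_univ, true_and]
    exact ⟨fun ⟨h1, h2⟩ => ⟨h1, stillopen_mono hf hg hO IH h1 h2⟩,
      fun ⟨h1, h2⟩ => ⟨h1, stillopen_mono hg hf hO.symm IH' h1 h2⟩⟩
  have hyg : y ∉ openers g := hO ▸ hy
  have haS : f y ∈ S := by
    simp only [hS, Finset.mem_filter, Finset.mem_univ, true_and]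
    exact ⟨closer_lt hf hy, le_of_eq (hf.1 y).symm⟩
  have hbS : g y ∈ S := by
    rw [hSg]
    simp only [Finset.mem_filter, Finset.mem_univ, true_and]
    exact ⟨closer_lt hg hyg, le_of_eq (hg.1 y).symm⟩
  have hjf : jcount f y = (S.filter fun x => f y < x).card := by
    rw [jcount]
    congr 1
    ext x
    simp only [hS, Finset.mem_filter, Finset.mem_univ, true_and]
    constructor
    · rintro ⟨h1, h2, h3⟩; exact ⟨⟨h2, h3.le⟩, h1⟩
    · rintro ⟨⟨h2, h3⟩, h1⟩
      refine ⟨h1, h2, lt_of_le_of_ne h3 ?_⟩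
      intro he
      have : x = f y := by rw [← hf.1 x, ← he]
      exact absurd (this ▸ h1) (lt_irrefl _)
  have hjg : jcount g y = (S.filter fun x => g y < x).card := by
    rw [jcount, hSg]
    congr 1
    ext x
    simp only [Finset.mem_filter, Finset.mem_univ, true_and]
    constructor
    · rintro ⟨h1, h2, h3⟩; exact ⟨⟨h2, h3.le⟩, h1⟩
    · rintro ⟨⟨h2, h3⟩, h1⟩
      refine ⟨h1, h2, lt_of_le_of_ne h3 ?_⟩
      intro he
      have : x = g y := by rw [← hg.1 x, ← he]
      exact absurd (this ▸ h1) (lt_irrefl _)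
  have hss : (S.filter fun x => g y < x) ⊂ (S.filter fun x => f y < x) := by
    refine Finset.ssubset_iff_of_subset (fun x hx => ?_) |>.2 ?_
    · simp only [Finset.mem_filter] at hx ⊢
      exact ⟨hx.1, lt_trans hab hx.2⟩
    · exact ⟨g y, Finset.mem_filter.2 ⟨hbS, hab⟩,
        fun h => absurd (Finset.mem_filter.1 h).2 (lt_irrefl _)⟩
  have := Finset.card_lt_card hss
  omega

lemma encode_inj {f g : Fin n → Fin n} (hf : IsPairing f) (hg : IsPairing g)
    (hO : openers f = openers g)
    (hJ : ∀ y, y ∉ openers f → jcount f y = jcount g y) : f = g := by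
  have closers : ∀ y : Fin n, y ∉ openers f → f y = g y := by
    suffices H : ∀ m : ℕ, ∀ y : Fin n, (y : ℕ) < m → y ∉ openers f → f y = g y by
      exact fun y hy => H n y y.isLt hy
    intro m
    induction m with
    | zero => intro y hy; omega
    | succ m ih =>
      intro y hy hyO
      have IH : ∀ z, z < y → z ∉ openers f → f z = g z := by
        intro z hz hzO
        exact ih z (by omega) hzO
      rcases lt_trichotomy (f y) (g y) with h | h | h
      · exact absurd (key_step hf hg hO hyO IH (hJ y hyO) h) id
      · exact h
      · have IH' : ∀ z, z < y → z ∉ openers g → g z = f z := fun z h1 h2 =>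
          (IH z h1 (hO ▸ h2)).symm
        exact absurd (key_step hg hf hO.symm (hO ▸ hyO) IH'
          (hJ y hyO).symm h) id
  funext x
  by_cases hx : x ∈ openers f
  · have hgxO : g x ∉ openers f := hO ▸ opener_not_opener hg (hO ▸ hx)
    have : f (g x) = g (g x) := closers (g x) hgxO
    rw [hg.1 x] at this
    exact finj hf.1 (by rw [this, hf.1])
  · exact closers x hx

lemma inner_sum {p k : ℕ} {f : Fin (2 * p) → Fin (2 * p)} (hf : IsPairing f)
    (c : Fin k → ℝ) (hc : ∀ l, 0 ≤ c l) :
    ∑ i : Fin (2 * p) → Fin k,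
        (∏ j, Real.sqrt (c (i j))) * (pairingDelta f i : ℝ) = (∑ l, c l) ^ p := by
  classical
  set O := openers f with hO
  -- reduce to a filtered sum
  have step1 : ∑ i : Fin (2 * p) → Fin k,
      (∏ j, Real.sqrt (c (i j))) * (pairingDelta f i : ℝ)
      = ∑ i ∈ Finset.univ.filter (fun i : Fin (2 * p) → Fin k => ∀ x, i (f x) = i x),
          ∏ j, Real.sqrt (c (i j)) := by
    rw [Finset.sum_filter]
    refine Finset.sum_congr rfl fun i _ => ?_
    rw [pairingDelta]
    split <;> simp
  rw [step1]
  -- bijection with functions on openers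
  have hmem : ∀ j : Fin (2 * p), j ∉ O → f j ∈ O := fun j hj => closer_opener hf hj
  have step2 : ∑ i ∈ Finset.univ.filter (fun i : Fin (2 * p) → Fin k => ∀ x, i (f x) = i x),
      ∏ j, Real.sqrt (c (i j))
      = ∑ g ∈ (Finset.univ : Finset (↥O → Fin k)), ∏ x : ↥O, c (g x) := by
    refine Finset.sum_bij' (fun i _ => fun x : ↥O => i x.1)
      (fun g _ => fun j => if h : j ∈ O then g ⟨j, h⟩ else g ⟨f j, hmem j h⟩)
      (fun i hi => Finset.mem_univ _) ?_ ?_ ?_ ?_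
    · intro g _
      simp only [Finset.mem_filter, Finset.mem_univ, true_and]
      intro x
      by_cases hx : x ∈ O
      · have hfx : f x ∉ O := opener_not_opener hf hx
        rw [dif_neg hfx, dif_pos hx]
        congr 1
        exact Subtype.ext (hf.1 x)
      · have hfx : f x ∈ O := hmem x hx
        rw [dif_pos hfx, dif_neg hx]
    · intro i hi
      simp only [Finset.mem_filter, Finset.mem_univ, true_and] at hi
      funext j
      beta_reduce
      by_cases h : j ∈ O
      · rw [dif_pos h]
      · rw [dif_neg h]
        exact hi j
    · intro g _
      funext x
      beta_reduce
      rw [dif_pos x.2]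
    · intro i hi
      simp only [Finset.mem_filter, Finset.mem_univ, true_and] at hi
      -- split product over openers and closers
      have hsplit : (∏ j, Real.sqrt (c (i j)))
          = (∏ j ∈ O, Real.sqrt (c (i j))) * ∏ j ∈ Oᶜ, Real.sqrt (c (i j)) :=
        (Finset.prod_mul_prod_compl O _).symm
      rw [hsplit, ← image_openers hf,
        Finset.prod_image (fun x _ y _ h => finj hf.1 h)]
      have : ∀ x ∈ O, Real.sqrt (c (i x)) * Real.sqrt (c (i (f x)))
          = c (i x) := by
        intro x _
        rw [hi x, Real.mul_self_sqrt (hc _)]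
      rw [← Finset.prod_mul_distrib, Finset.prod_congr rfl this]
      exact (Finset.prod_coe_sort O fun x => c (i x)).symm
  rw [step2]
  have step3 : ∑ g ∈ (Finset.univ : Finset (↥O → Fin k)), ∏ x : ↥O, c (g x)
      = ∏ x : ↥O, ∑ l, c l := by
    rw [Finset.prod_univ_sum (fun _ => (Finset.univ : Finset (Fin k))) (fun _ l => c l),
      Fintype.piFinset_univ]
  rw [step3, Finset.prod_const, Finset.card_univ, Fintype.card_coe, hO, card_openers hf]

lemma geom_le {t : ℝ} (h0 : 0 ≤ t) (h1 : t < 1) (n : ℕ) :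
    ∑ j ∈ Finset.range n, t ^ j ≤ (1 - t)⁻¹ := by
  have h2 : 0 < 1 - t := by linarith
  rw [inv_eq_one_div, le_div_iff₀ h2]
  have h3 := geom_sum_mul t n
  have h4 : (0:ℝ) ≤ t ^ n := pow_nonneg h0 n
  nlinarith [h3]

lemma sum_crossings_le {p : ℕ} (hp : 1 ≤ p) {t : ℝ} (h0 : 0 ≤ t) (h1 : t < 1) :
    ∑ f ∈ pairings (2 * p), t ^ crossings f ≤ 4 ^ p * ((1 - t)⁻¹) ^ p := by
  classical
  set n := 2 * p with hn
  have hn0 : 0 < n := by omega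
  set Φ : (Fin n → Fin n) → Finset (Fin n) × (Fin n → ℕ) := fun f =>
    (openers f, fun y => if y ∈ openers f then 0 else jcount f y) with hΦ
  set W : Finset (Fin n) × (Fin n → ℕ) → ℝ := fun OJ =>
    ∏ y, if y ∈ OJ.1 then 1 else t ^ OJ.2 y with hW
  have hWnn : ∀ x, 0 ≤ W x := by
    intro x
    refine Finset.prod_nonneg fun y _ => ?_
    split
    · exact zero_le_one
    · exact pow_nonneg h0 _
  have hpair : ∀ f ∈ pairings n, IsPairing f := by
    intro f hf
    simpa [pairings] using hf
  -- Step A : weights match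
  have stepA : ∀ f ∈ pairings n, t ^ crossings f = W (Φ f) := by
    intro f hf
    have hf' := hpair f hf
    rw [crossings_eq_sum hf', ← Finset.prod_pow_eq_pow_sum]
    rw [hW, hΦ]
    simp only
    rw [← Finset.prod_mul_prod_compl (openers f)
      (fun y => if y ∈ openers f then (1:ℝ) else t ^ (if y ∈ openers f then 0 else jcount f y))]
    rw [Finset.prod_congr rfl (fun y hy => if_pos hy), Finset.prod_const_one, one_mul]
    refine (Finset.prod_congr rfl fun y hy => ?_).symm
    rw [Finset.mem_compl] at hy
    rw [if_neg hy, if_neg hy]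
  -- Step B : injectivity
  have stepB : Set.InjOn Φ (pairings n) := by
    intro f hf g hg he
    have hf' := hpair f hf
    have hg' := hpair g hg
    have hO : openers f = openers g := congrArg Prod.fst he
    refine encode_inj hf' hg' hO fun y hy => ?_
    have hJ : (fun y => if y ∈ openers f then 0 else jcount f y)
        = fun y => if y ∈ openers g then 0 else jcount g y := congrArg Prod.snd he
    have := congrFun hJ y
    rw [if_neg hy, if_neg (hO ▸ hy)] at this
    exact this
  -- rewrite as sum over image
  have step1 : ∑ f ∈ pairings n, t ^ crossings f = ∑ x ∈ (pairings n).image Φ, W x := by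
    rw [Finset.sum_image (fun f hf g hg => stepB hf hg)]
    exact Finset.sum_congr rfl stepA
  set A : Finset (Finset (Fin n)) := Finset.univ.filter fun O => O.card = p with hA
  set B : Finset (Fin n) → Finset (Fin n → ℕ) := fun O =>
    Fintype.piFinset fun y => if y ∈ O then ({0} : Finset ℕ) else Finset.range n with hB
  set T : Finset (Finset (Fin n) × (Fin n → ℕ)) :=
    A.biUnion fun O => (B O).image fun J => (O, J) with hT
  -- Step C : image ⊆ T
  have stepC : (pairings n).image Φ ⊆ T := by
    intro x hx
    rw [Finset.mem_image] at hx
    obtain ⟨f, hf, rfl⟩ := hx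
    have hf' := hpair f hf
    rw [hT, Finset.mem_biUnion]
    refine ⟨openers f, ?_, ?_⟩
    · rw [hA, Finset.mem_filter]
      exact ⟨Finset.mem_univ _, card_openers hf'⟩
    · rw [Finset.mem_image]
      refine ⟨_, ?_, rfl⟩
      rw [hB, Fintype.mem_piFinset]
      intro y
      by_cases hy : y ∈ openers f
      · simp [hy]
      · simp only [hy, if_false, if_neg hy, Finset.mem_range]
        exact jcount_lt hn0 y
  have step2 : ∑ x ∈ (pairings n).image Φ, W x ≤ ∑ x ∈ T, W x :=
    Finset.sum_le_sum_of_subset_of_nonneg stepC fun x _ _ => hWnn x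
  -- Step D : evaluate sum over T
  have hdisj : (↑A : Set (Finset (Fin n))).PairwiseDisjoint
      fun O => (B O).image fun J => (O, J) := by
    intro O1 _ O2 _ hne
    refine Finset.disjoint_left.2 fun x hx1 hx2 => ?_
    rw [Finset.mem_image] at hx1 hx2
    obtain ⟨J1, _, rfl⟩ := hx1
    obtain ⟨J2, _, h2⟩ := hx2
    exact hne (congrArg Prod.fst h2).symm
  have step3 : ∑ x ∈ T, W x = ∑ O ∈ A, ∑ J ∈ B O, W (O, J) := by
    rw [hT, Finset.sum_biUnion hdisj]
    refine Finset.sum_congr rfl fun O _ => ?_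
    exact Finset.sum_image fun J1 _ J2 _ h => congrArg Prod.snd h
  set G : ℝ := ∑ j ∈ Finset.range n, t ^ j with hG
  have hGnn : 0 ≤ G := Finset.sum_nonneg fun j _ => pow_nonneg h0 j
  -- Step E : per-O evaluation
  have stepE : ∀ O ∈ A, ∑ J ∈ B O, W (O, J) = G ^ p := by
    intro O hO
    rw [hA, Finset.mem_filter] at hO
    have hcard : Oᶜ.card = p := by
      have := Finset.card_add_card_compl O
      simp only [Fintype.card_fin] at this
      omega
    have he : ∑ J ∈ B O, W (O, J)
        = ∏ y, ∑ j ∈ (if y ∈ O then ({0} : Finset ℕ) else Finset.range n),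
            (if y ∈ O then (1:ℝ) else t ^ j) := by
      rw [Finset.prod_univ_sum]
    rw [he]
    have he2 : ∀ y : Fin n,
        (∑ j ∈ (if y ∈ O then ({0} : Finset ℕ) else Finset.range n),
          (if y ∈ O then (1:ℝ) else t ^ j)) = if y ∈ O then 1 else G := by
      intro y
      by_cases hy : y ∈ O <;> simp [hy, hG]
    rw [Finset.prod_congr rfl fun y _ => he2 y]
    rw [← Finset.prod_mul_prod_compl O, Finset.prod_congr rfl (fun y hy => if_pos hy),
      Finset.prod_const_one, one_mul,
      Finset.prod_congr rfl (fun y hy => if_neg (Finset.mem_compl.1 hy)),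
      Finset.prod_const, hcard]
  have step4 : ∑ O ∈ A, ∑ J ∈ B O, W (O, J) = A.card * G ^ p := by
    rw [Finset.sum_congr rfl stepE, Finset.sum_const, nsmul_eq_mul]
  have hAcard : (A.card : ℝ) ≤ 4 ^ p := by
    have h5 : A.card ≤ 2 ^ n := by
      have := Finset.card_le_card (Finset.subset_univ A)
      simpa [Fintype.card_finset] using this
    calc (A.card : ℝ) ≤ (2:ℝ) ^ n := by exact_mod_cast h5
      _ = 4 ^ p := by rw [hn, pow_mul]; norm_num
  calc ∑ f ∈ pairings n, t ^ crossings f ≤ ∑ x ∈ T, W x := step1 ▸ step2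
    _ = A.card * G ^ p := by rw [step3, step4]
    _ ≤ 4 ^ p * ((1 - t)⁻¹) ^ p := by
        refine mul_le_mul hAcard ?_ (pow_nonneg hGnn p) (by positivity)
        exact pow_le_pow_left₀ hGnn (geom_le h0 h1 n) p

end BGCore


/-- weighted combinatorial core of the Burkholder–Gundy inequality,
Proposition 3.4. For `p, k ≥ 1`, `q ∈ (−1,1)` and nonnegative reals `c₀,…,c_{k−1}`,
`∑_{(i₁,…,i_{2p}) ∈ {0,…,k−1}^{2p}} (∏_{j=1}^{2p} √(c_{i_j}))
   ∑_{π ∈ P₂({1,…,2p})} |q|^{Cr(π)} δ(π,(i₁,…,i_{2p}))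
 ≤ (2/√(1−|q|))^{2p} (∑_{l=0}^{k−1} c_l)^p`. -/
theorem weighted_burkholder_gundy_core (p k : ℕ) (hp : 1 ≤ p) (hk : 1 ≤ k)
    (q : ℝ) (hq₁ : -1 < q) (hq₂ : q < 1)
    (c : Fin k → ℝ) (hc : ∀ l, 0 ≤ c l) :
    ∑ i : Fin (2 * p) → Fin k,
        (∏ j, Real.sqrt (c (i j))) *
          ∑ f ∈ pairings (2 * p), |q| ^ crossings f * (pairingDelta f i : ℝ)
      ≤ (2 / Real.sqrt (1 - |q|)) ^ (2 * p) * (∑ l, c l) ^ p := by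
  classical
  set t := |q| with ht
  have h0 : 0 ≤ t := abs_nonneg q
  have h1 : t < 1 := abs_lt.2 ⟨hq₁, hq₂⟩
  have hs : (0:ℝ) < 1 - t := by linarith
  have hcs : (0:ℝ) ≤ ∑ l, c l := Finset.sum_nonneg fun l _ => hc l
  have swap : ∑ i : Fin (2 * p) → Fin k,
        (∏ j, Real.sqrt (c (i j))) *
          ∑ f ∈ pairings (2 * p), t ^ crossings f * (pairingDelta f i : ℝ)
      = ∑ f ∈ pairings (2 * p), t ^ crossings f *
          ∑ i : Fin (2 * p) → Fin k,
            (∏ j, Real.sqrt (c (i j))) * (pairingDelta f i : ℝ) := by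
    simp_rw [Finset.mul_sum]
    rw [Finset.sum_comm]
    simp_rw [mul_left_comm]
  rw [swap]
  have hpair : ∀ f ∈ pairings (2 * p), IsPairing f := by
    intro f hf
    simpa [pairings] using hf
  calc ∑ f ∈ pairings (2 * p), t ^ crossings f *
          ∑ i : Fin (2 * p) → Fin k,
            (∏ j, Real.sqrt (c (i j))) * (pairingDelta f i : ℝ)
      = ∑ f ∈ pairings (2 * p), t ^ crossings f * (∑ l, c l) ^ p := by
        refine Finset.sum_congr rfl fun f hf => ?_
        rw [BGCore.inner_sum (hpair f hf) c hc]
    _ = (∑ f ∈ pairings (2 * p), t ^ crossings f) * (∑ l, c l) ^ p :=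
        (Finset.sum_mul _ _ _).symm
    _ ≤ (4 ^ p * ((1 - t)⁻¹) ^ p) * (∑ l, c l) ^ p :=
        mul_le_mul_of_nonneg_right (BGCore.sum_crossings_le hp h0 h1) (pow_nonneg hcs p)
    _ = (2 / Real.sqrt (1 - t)) ^ (2 * p) * (∑ l, c l) ^ p := by
        congr 1
        have h2 : (2 / Real.sqrt (1 - t)) ^ 2 = 4 / (1 - t) := by
          rw [div_pow, Real.sq_sqrt hs.le]
          norm_num
        rw [pow_mul, h2, div_eq_mul_inv, mul_pow]
end

section
/- (Duhamel's formula, equation (3.9).) Let A be a unital Banach algebra (over ℝ or ℂ). Then for all X, Y ∈ A, exp(X) − exp(Y) = ∫_0^1 exp(αX) · (X − Y) · exp((1−α)Y) dα, where the integral is a Bochner integral in A. -/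
/-! `t ↦ exp (t • X) * exp ((1 - t) • Y)` runs from `exp Y` to `exp X` as `t` goes from `0` to `1`,
and by the product rule its derivative is the Duhamel integrand; the formula is the fundamental
theorem of calculus for this path. -/

open NormedSpace

section

variable {𝕂 A : Type*} [RCLike 𝕂] [NormedRing A] [NormedAlgebra 𝕂 A] [CompleteSpace A]

theorem hasDerivAt_exp_one_sub_smul_const (Y : A) (t : 𝕂) :
    HasDerivAt (fun u : 𝕂 => exp ((1 - u) • Y)) (-(Y * exp ((1 - t) • Y))) t := by
  simpa [Function.comp_def] using
    (hasDerivAt_exp_smul_const' Y (1 - t)).scomp t ((hasDerivAt_id t).const_sub 1)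

theorem hasDerivAt_exp_smul_mul_exp_one_sub_smul (X Y : A) (t : 𝕂) :
    HasDerivAt (fun u : 𝕂 => exp (u • X) * exp ((1 - u) • Y))
      (exp (t • X) * (X - Y) * exp ((1 - t) • Y)) t := by
  refine ((hasDerivAt_exp_smul_const X t).mul
    (hasDerivAt_exp_one_sub_smul_const Y t)).congr_deriv ?_
  noncomm_ring

theorem continuous_exp_smul_mul_mul_exp_one_sub_smul (X Y Z : A) :
    Continuous fun u : 𝕂 => exp (u • X) * Z * exp ((1 - u) • Y) :=
  have hX : Continuous fun u : 𝕂 => exp (u • X) :=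
    continuous_iff_continuousAt.2 fun t => (hasDerivAt_exp_smul_const X t).continuousAt
  have hY : Continuous fun u : 𝕂 => exp ((1 - u) • Y) :=
    continuous_iff_continuousAt.2 fun t => (hasDerivAt_exp_one_sub_smul_const Y t).continuousAt
  (hX.mul continuous_const).mul hY

end

/-- Duhamel's formula, equation (3.9). In a unital Banach algebra `A`
(over `ℝ` or `ℂ`; a complex Banach algebra is in particular a real one, with the same
exponential), for all `X, Y ∈ A`,
`exp(X) − exp(Y) = ∫₀¹ exp(αX) (X − Y) exp((1−α)Y) dα`,
the integral being a Bochner integral in `A`. -/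
theorem duhamel_formula
    {A : Type*} [NormedRing A] [NormedAlgebra ℝ A] [CompleteSpace A]
    (X Y : A) :
    NormedSpace.exp X - NormedSpace.exp Y =
      ∫ α in (0 : ℝ)..1,
        NormedSpace.exp (α • X) * (X - Y) * NormedSpace.exp ((1 - α) • Y) := by
  rw [intervalIntegral.integral_eq_sub_of_hasDerivAt
    (fun t _ => hasDerivAt_exp_smul_mul_exp_one_sub_smul X Y t)
    ((continuous_exp_smul_mul_mul_exp_one_sub_smul X Y (X - Y)).intervalIntegrable 0 1)]
  simp
end

section
/- (Proposition 3.2, Lipschitz estimate, case k = 0.) Let A be a unital C*-algebra over ℂ and let μ be a finite complex Borel measure on ℝ with ∫_ℝ |ξ| d|μ|(ξ) < ∞. Then for all self-adjoint X, Y ∈ A, ‖f_μ(X) − f_μ(Y)‖ ≤ (∫_ℝ |ξ| d|μ|(ξ)) · ‖X − Y‖. -/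
open MeasureTheory

/-- `exp(i t X)` in a complex Banach algebra, for `t : ℝ`. -/
noncomputable def uexp {A : Type*} [NormedRing A] [NormedAlgebra ℂ A]
    (t : ℝ) (X : A) : A :=
  NormedSpace.exp ((Complex.I * (t : ℂ)) • X)

/-- `f_μ(X) := ∫_ℝ exp(iξX) dμ(ξ)` (Bochner integral in `A`), for a finite complex
Borel measure `μ` on `ℝ` represented by its total variation `ν = |μ|` together with a
unimodular density `ρ` (so that `dμ = ρ dν`). -/
noncomputable def fmu {A : Type*} [NormedRing A] [NormedAlgebra ℂ A] [CompleteSpace A]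
    (ν : Measure ℝ) (ρ : ℝ → ℂ) (X : A) : A :=
  ∫ ξ, ρ ξ • uexp ξ X ∂ν

/-- The first-derivative formula
`df_μ(X)(Y) = ∫₀¹ ∫_ℝ iξ exp(iαξX) Y exp(i(1−α)ξX) dμ(ξ) dα`. -/
noncomputable def dfmu {A : Type*} [NormedRing A] [NormedAlgebra ℂ A] [CompleteSpace A]
    (ν : Measure ℝ) (ρ : ℝ → ℂ) (X Y : A) : A :=
  ∫ α in (0 : ℝ)..1,
    ∫ ξ, (ρ ξ * (ξ : ℂ) * Complex.I) •
      (uexp (α * ξ) X * Y * uexp ((1 - α) * ξ) X) ∂ν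

open NormedSpace

lemma norm_le_one_of_mem_unitary {E : Type*} [NormedRing E] [StarRing E] [CStarRing E] {U : E}
    (hU : U ∈ unitary E) : ‖U‖ ≤ 1 := by
  rcases subsingleton_or_nontrivial E with _ | _
  · simp [Subsingleton.elim U 0]
  · exact (CStarRing.norm_of_mem_unitary hU).le

lemma hasDerivAt_exp_smul_mul_exp_one_sub_smul_s10 {𝔸 : Type*} [NormedRing 𝔸] [NormedAlgebra ℝ 𝔸]
    [CompleteSpace 𝔸] (B C : 𝔸) (α : ℝ) :
    HasDerivAt (fun α : ℝ => exp (α • B) * exp ((1 - α) • C))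
      (exp (α • B) * (B - C) * exp ((1 - α) • C)) α := by
  have hC : HasDerivAt (fun α : ℝ => exp ((1 - α) • C)) (-(C * exp ((1 - α) • C))) α := by
    simpa [Function.comp_def] using
      (hasDerivAt_exp_smul_const' C (1 - α)).scomp α ((hasDerivAt_id α).const_sub 1)
  refine ((hasDerivAt_exp_smul_const B α).mul hC).congr_deriv ?_
  noncomm_ring

section CStarAlgebra

variable {A : Type*} [CStarAlgebra A]

lemma exp_real_smul_mem_unitary {B : A} (hB : B ∈ skewAdjoint A) (t : ℝ) :
    exp (t • B) ∈ unitary A :=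
  let +nondep : NormedAlgebra ℚ A := .restrictScalars ℚ ℂ A
  exp_mem_unitary_of_mem_skewAdjoint (skewAdjoint.smul_mem t hB)

/-- Mean value inequality along `α ↦ exp (α • B) * exp ((1 - α) • C)`: its derivative
`exp (α • B) * (B - C) * exp ((1 - α) • C)` has norm `‖B - C‖`, the outer factors being
unitary. -/
lemma norm_exp_sub_exp_le_of_mem_skewAdjoint {B C : A} (hB : B ∈ skewAdjoint A)
    (hC : C ∈ skewAdjoint A) : ‖exp B - exp C‖ ≤ ‖B - C‖ := by
  have hderiv_norm (α : ℝ) : ‖exp (α • B) * (B - C) * exp ((1 - α) • C)‖ = ‖B - C‖ := by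
    rw [CStarRing.norm_mul_mem_unitary _ (exp_real_smul_mem_unitary hC _),
      CStarRing.norm_mem_unitary_mul _ (exp_real_smul_mem_unitary hB _)]
  simpa using norm_image_sub_le_of_norm_deriv_le_segment_01'
    (fun α _ => (hasDerivAt_exp_smul_mul_exp_one_sub_smul_s10 B C α).hasDerivWithinAt)
    (fun α _ => (hderiv_norm α).le)

lemma I_mul_ofReal_smul_mem_skewAdjoint {X : A} (hX : IsSelfAdjoint X) (t : ℝ) :
    (Complex.I * t) • X ∈ skewAdjoint A :=
  hX.smul_mem_skewAdjoint <| by simp [skewAdjoint.mem_iff]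

lemma norm_uexp_le_one {X : A} (hX : IsSelfAdjoint X) (t : ℝ) : ‖uexp t X‖ ≤ 1 := by
  simpa [uexp] using
    norm_le_one_of_mem_unitary
      (exp_real_smul_mem_unitary (I_mul_ofReal_smul_mem_skewAdjoint hX t) 1)

lemma norm_uexp_sub_uexp_le {X Y : A} (hX : IsSelfAdjoint X) (hY : IsSelfAdjoint Y) (t : ℝ) :
    ‖uexp t X - uexp t Y‖ ≤ |t| * ‖X - Y‖ := by
  calc ‖uexp t X - uexp t Y‖
      ≤ ‖(Complex.I * t) • X - (Complex.I * t) • Y‖ :=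
        norm_exp_sub_exp_le_of_mem_skewAdjoint (I_mul_ofReal_smul_mem_skewAdjoint hX t)
          (I_mul_ofReal_smul_mem_skewAdjoint hY t)
    _ = |t| * ‖X - Y‖ := by simp [← smul_sub, norm_smul]

end CStarAlgebra

lemma continuous_uexp {A : Type*} [NormedRing A] [NormedAlgebra ℂ A] [CompleteSpace A] (X : A) :
    Continuous fun t : ℝ => uexp t X :=
  let +nondep : NormedAlgebra ℚ A := .restrictScalars ℚ ℂ A
  exp_continuous.comp (by fun_prop)

/-- Proposition 3.2, Lipschitz estimate, case `k = 0`. Let `A` be a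
unital C*-algebra over `ℂ` and `μ` a finite complex Borel measure on `ℝ` (given by its
total variation `ν` and unimodular density `ρ`) with `∫ |ξ| d|μ|(ξ) < ∞`. Then for all
self-adjoint `X, Y ∈ A`, `‖f_μ(X) − f_μ(Y)‖ ≤ (∫ |ξ| d|μ|(ξ)) ‖X − Y‖`. -/
theorem fmu_lipschitz {A : Type*} [CStarAlgebra A]
    (ν : Measure ℝ) [IsFiniteMeasure ν]
    (ρ : ℝ → ℂ) (hρm : Measurable ρ) (hρ1 : ∀ ξ, ‖ρ ξ‖ = 1)
    (hint : Integrable (fun ξ : ℝ => ξ) ν)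
    (X Y : A) (hX : IsSelfAdjoint X) (hY : IsSelfAdjoint Y) :
    ‖fmu ν ρ X - fmu ν ρ Y‖ ≤ (∫ ξ, |ξ| ∂ν) * ‖X - Y‖ := by
  have hρ : Integrable ρ ν :=
    (integrable_const (1 : ℝ)).mono' hρm.aestronglyMeasurable (ae_of_all _ fun ξ => (hρ1 ξ).le)
  have hintegrable {Z : A} (hZ : IsSelfAdjoint Z) : Integrable (fun ξ => ρ ξ • uexp ξ Z) ν :=
    hρ.smul_bdd 1 (continuous_uexp Z).aestronglyMeasurable (ae_of_all _ (norm_uexp_le_one hZ))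
  calc ‖fmu ν ρ X - fmu ν ρ Y‖
      = ‖∫ ξ, ρ ξ • (uexp ξ X - uexp ξ Y) ∂ν‖ := by
        simp only [fmu, smul_sub, integral_sub (hintegrable hX) (hintegrable hY)]
    _ ≤ ∫ ξ, |ξ| * ‖X - Y‖ ∂ν :=
        norm_integral_le_of_norm_le (hint.abs.mul_const _) <| ae_of_all _ fun ξ => by
          simpa only [norm_smul, hρ1, one_mul] using norm_uexp_sub_uexp_le hX hY ξ
    _ = (∫ ξ, |ξ| ∂ν) * ‖X - Y‖ := integral_mul_const _ _
end

section
/- (Propositions 3.1 and 3.2: first derivative formula, stated without tensor products.) Let A be a unital C*-algebra over ℂ and let μ be a finite complex Borel measure on ℝ with ∫_ℝ (1 + |ξ|) d|μ|(ξ) < ∞. Then the map X ↦ f_μ(X), viewed as a map from the real Banach space A_* of self-adjoint elements of A to A, is Fréchet differentiable at every X ∈ A_*, and its derivative is given by df_μ(X)(Y) = ∫_0^1 ∫_ℝ iξ · exp(iαξX) · Y · exp(i(1−α)ξX) dμ(ξ) dα for every self-adjoint Y. -/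
/-!
Duhamel's formula `e^{it(X+Y)} - e^{itX} = ∫₀¹ it e^{iαt(X+Y)} Y e^{i(1-α)tX} dα`, together with
the unitarity of `e^{itZ}` for self-adjoint `Z`, bounds the first-order remainder of
`X ↦ e^{itX}` by `|t| min(2, |t|‖Y‖) ‖Y‖`. After exchanging the two integrals in `df_μ` (Fubini,
using `∫ |ξ| d|μ| < ∞`), the remainder of `f_μ` is at most `(∫ |ξ| min(2, |ξ|‖Y‖) d|μ|) ‖Y‖`,
and the integral tends to `0` with `‖Y‖` by dominated convergence with dominating function `2|ξ|`.
-/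

open MeasureTheory

open Complex NormedSpace Filter Topology

section Calculus

variable {A : Type*} [NormedRing A] [NormedAlgebra ℂ A]

lemma uexp_eq_exp_smul (s : ℝ) (X : A) : uexp s X = exp (s • I • X) := by
  rw [uexp, ← Complex.coe_smul, smul_smul, mul_comm]

lemma commute_uexp (X : A) (s : ℝ) : Commute X (uexp s X) :=
  Commute.exp_right ((Commute.refl X).smul_right _)

noncomputable def duexp (t : ℝ) (X Y : A) : A :=
  ∫ a in (0 : ℝ)..1, (I * t) • (uexp (a * t) X * Y * uexp ((1 - a) * t) X)

lemma smul_duexp (c : ℂ) (t : ℝ) (X Y : A) :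
    c • duexp t X Y = ∫ a in Set.Ioc (0 : ℝ) 1,
      (c * t * I) • (uexp (a * t) X * Y * uexp ((1 - a) * t) X) := by
  rw [duexp, ← intervalIntegral.integral_smul, intervalIntegral.integral_of_le zero_le_one]
  congr! 2 with a
  rw [smul_smul]
  ring_nf

variable [CompleteSpace A]

lemma hasDerivAt_uexp (X : A) (s : ℝ) :
    HasDerivAt (fun s : ℝ => uexp s X) (I • (uexp s X * X)) s := by
  simp only [uexp_eq_exp_smul, ← mul_smul_comm]
  exact hasDerivAt_exp_smul_const (I • X) s

@[fun_prop]
lemma Continuous.uexp {β : Type*} [TopologicalSpace β] {f : β → ℝ} (hf : Continuous f)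
    (X : A) : Continuous fun b => uexp (f b) X :=
  (continuous_iff_continuousAt.2 fun s => (hasDerivAt_uexp X s).continuousAt).comp hf

lemma uexp_add_sub_uexp (X Y : A) (t : ℝ) :
    uexp t (X + Y) - uexp t X =
      ∫ a in (0 : ℝ)..1, (I * t) • (uexp (a * t) (X + Y) * Y * uexp ((1 - a) * t) X) := by
  have hderiv (a : ℝ) : HasDerivAt (fun a : ℝ => uexp (a * t) (X + Y) * uexp ((1 - a) * t) X)
      ((I * t) • (uexp (a * t) (X + Y) * Y * uexp ((1 - a) * t) X)) a := by
    have hE : HasDerivAt (fun a : ℝ => uexp (a * t) (X + Y))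
        (t • I • (uexp (a * t) (X + Y) * (X + Y))) a :=
      HasDerivAt.scomp (g₁ := fun s => uexp s (X + Y)) a (hasDerivAt_uexp (X + Y) (a * t))
        (hasDerivAt_mul_const t)
    have hF : HasDerivAt (fun a : ℝ => uexp ((1 - a) * t) X)
        (-t • I • (X * uexp ((1 - a) * t) X)) a := by
      have := (hasDerivAt_uexp X ((1 - a) * t)).scomp a
        (((hasDerivAt_id a).const_sub 1).mul_const t)
      rw [(commute_uexp X _).eq]
      simpa [Function.comp_def] using this
    convert hE.mul hF using 1
    · rfl
    simp only [← Complex.coe_smul, smul_mul_assoc, mul_smul_comm, smul_smul, mul_add, add_mul,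
      mul_assoc, ofReal_neg]
    module
  rw [intervalIntegral.integral_eq_sub_of_hasDerivAt (fun a _ => hderiv a)
    ((by fun_prop : Continuous _).intervalIntegrable _ _)]
  simp [uexp]

end Calculus

section CStar

variable {A : Type*} [CStarAlgebra A] {X Y : A}

lemma uexp_mem_unitary (hX : IsSelfAdjoint X) (t : ℝ) : uexp t X ∈ unitary A := by
  -- the lemmas on `NormedSpace.exp` ask for a `ℚ`-algebra structure, which is not an instance here
  let +nondep : NormedAlgebra ℚ A := .restrictScalars ℚ ℂ A
  apply exp_mem_unitary_of_mem_skewAdjoint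
  rw [skewAdjoint.mem_iff, star_smul, hX.star_eq, star_mul', star_def, conj_I, conj_ofReal,
    neg_mul, mul_comm, neg_smul]

lemma norm_uexp_le (hX : IsSelfAdjoint X) (t : ℝ) : ‖uexp t X‖ ≤ 1 := by
  nontriviality A
  exact (CStarRing.norm_of_mem_unitary (uexp_mem_unitary hX t)).le

lemma norm_uexp_add_sub_uexp_le (hX : IsSelfAdjoint X) (hY : IsSelfAdjoint Y) (t : ℝ) :
    ‖uexp t (X + Y) - uexp t X‖ ≤ min 2 (|t| * ‖Y‖) := by
  refine le_min ?_ ?_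
  · calc ‖uexp t (X + Y) - uexp t X‖ ≤ 1 + 1 :=
          (norm_sub_le _ _).trans (add_le_add (norm_uexp_le (hX.add hY) t) (norm_uexp_le hX t))
      _ = 2 := one_add_one_eq_two
  · rw [uexp_add_sub_uexp]
    refine (intervalIntegral.norm_integral_le_of_norm_le_const (C := |t| * ‖Y‖)
      fun a _ => ?_).trans_eq (by norm_num)
    rw [norm_smul, norm_mul, norm_I, one_mul, norm_real, Real.norm_eq_abs,
      CStarRing.norm_mul_mem_unitary _ (uexp_mem_unitary hX _),
      CStarRing.norm_mem_unitary_mul _ (uexp_mem_unitary (hX.add hY) _)]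

lemma norm_uexp_add_sub_uexp_sub_duexp_le (hX : IsSelfAdjoint X) (hY : IsSelfAdjoint Y)
    (t : ℝ) : ‖uexp t (X + Y) - uexp t X - duexp t X Y‖ ≤ |t| * min 2 (|t| * ‖Y‖) * ‖Y‖ := by
  rw [uexp_add_sub_uexp, duexp, ← intervalIntegral.integral_sub
    ((by fun_prop : Continuous _).intervalIntegrable _ _)
    ((by fun_prop : Continuous _).intervalIntegrable _ _)]
  refine (intervalIntegral.norm_integral_le_of_norm_le_const
    (C := |t| * min 2 (|t| * ‖Y‖) * ‖Y‖) fun a ha => ?_).trans_eq (by norm_num)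
  rw [Set.uIoc_of_le zero_le_one] at ha
  have hat : |a * t| ≤ |t| := by
    rw [abs_mul, abs_of_pos ha.1]
    exact mul_le_of_le_one_left (abs_nonneg t) ha.2
  rw [← smul_sub, ← sub_mul, ← sub_mul, norm_smul, norm_mul, norm_I, one_mul, norm_real,
    Real.norm_eq_abs, CStarRing.norm_mul_mem_unitary _ (uexp_mem_unitary hX _), mul_assoc]
  gcongr
  calc ‖(uexp (a * t) (X + Y) - uexp (a * t) X) * Y‖
      ≤ ‖uexp (a * t) (X + Y) - uexp (a * t) X‖ * ‖Y‖ := norm_mul_le _ _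
    _ ≤ min 2 (|t| * ‖Y‖) * ‖Y‖ := by
      gcongr
      exact (norm_uexp_add_sub_uexp_le hX hY _).trans (by gcongr)

end CStar

section Modulus

variable {ν : Measure ℝ}

lemma norm_abs_mul_min_le {s : ℝ} (hs : 0 ≤ s) (ξ : ℝ) :
    ‖|ξ| * min 2 (|ξ| * s)‖ ≤ 2 * |ξ| := by
  rw [Real.norm_of_nonneg (by positivity), mul_comm]
  exact mul_le_mul_of_nonneg_right (min_le_left _ _) (abs_nonneg ξ)

lemma integrable_abs_mul_min (hint : Integrable (fun ξ : ℝ => ξ) ν) {s : ℝ} (hs : 0 ≤ s) :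
    Integrable (fun ξ => |ξ| * min 2 (|ξ| * s)) ν :=
  (hint.norm.const_mul 2).mono' (by fun_prop : Continuous _).aestronglyMeasurable
    (ae_of_all _ (norm_abs_mul_min_le hs))

lemma tendsto_integral_abs_mul_min (hint : Integrable (fun ξ : ℝ => ξ) ν) :
    Tendsto (fun s => ∫ ξ, |ξ| * min 2 (|ξ| * s) ∂ν) (𝓝[≥] 0) (𝓝 0) := by
  have hlim (ξ : ℝ) : Tendsto (fun s => |ξ| * min 2 (|ξ| * s)) (𝓝[≥] 0) (𝓝 0) := by
    have : Continuous fun s : ℝ => |ξ| * min 2 (|ξ| * s) := by fun_prop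
    simpa using (this.tendsto 0).mono_left nhdsWithin_le_nhds
  simpa using tendsto_integral_filter_of_dominated_convergence (l := 𝓝[≥] (0 : ℝ)) _
    (Eventually.of_forall fun s => (by fun_prop : Continuous _).aestronglyMeasurable)
    (eventually_nhdsWithin_of_forall fun s hs => ae_of_all _ (norm_abs_mul_min_le hs))
    (hint.norm.const_mul 2) (ae_of_all _ hlim)

end Modulus

section Integral

variable {A : Type*} [CStarAlgebra A] {X Y : A} {ν : Measure ℝ} {ρ : ℝ → ℂ}

lemma integrable_smul_uexp [IsFiniteMeasure ν] (hρm : Measurable ρ) (hρ1 : ∀ ξ, ‖ρ ξ‖ = 1)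
    (hX : IsSelfAdjoint X) : Integrable (fun ξ => ρ ξ • uexp ξ X) ν := by
  refine (integrable_const (1 : ℝ)).mono'
    (hρm.aestronglyMeasurable.smul (by fun_prop : Continuous _).aestronglyMeasurable)
    (ae_of_all _ fun ξ => ?_)
  rw [norm_smul, hρ1, one_mul]
  exact norm_uexp_le hX ξ

lemma integrable_dfmu_integrand [SFinite ν] (hρm : Measurable ρ) (hρ1 : ∀ ξ, ‖ρ ξ‖ = 1)
    (hint : Integrable (fun ξ : ℝ => ξ) ν) (hX : IsSelfAdjoint X) (Y : A) :
    Integrable (fun p : ℝ × ℝ => (ρ p.2 * p.2 * I) •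
      (uexp (p.1 * p.2) X * Y * uexp ((1 - p.1) * p.2) X))
      ((volume.restrict (Set.Ioc (0 : ℝ) 1)).prod ν) := by
  refine ((hint.norm.const_mul ‖Y‖).comp_snd _).mono' ?_ (ae_of_all _ fun p => ?_)
  · exact (((hρm.comp measurable_snd).mul (measurable_ofReal.comp measurable_snd)).mul
      measurable_const).aestronglyMeasurable.smul
      (by fun_prop : Continuous _).aestronglyMeasurable
  · rw [norm_smul, norm_mul, norm_mul, hρ1, norm_I, norm_real, one_mul, mul_one,
      CStarRing.norm_mul_mem_unitary _ (uexp_mem_unitary hX _),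
      CStarRing.norm_mem_unitary_mul _ (uexp_mem_unitary hX _), mul_comm]

lemma dfmu_eq_integral_smul_duexp [SFinite ν] (hρm : Measurable ρ) (hρ1 : ∀ ξ, ‖ρ ξ‖ = 1)
    (hint : Integrable (fun ξ : ℝ => ξ) ν) (hX : IsSelfAdjoint X) (Y : A) :
    dfmu ν ρ X Y = ∫ ξ, ρ ξ • duexp ξ X Y ∂ν := by
  simp only [dfmu, smul_duexp, intervalIntegral.integral_of_le zero_le_one]
  exact integral_integral_swap (integrable_dfmu_integrand hρm hρ1 hint hX Y)

lemma integrable_smul_duexp [SFinite ν] (hρm : Measurable ρ) (hρ1 : ∀ ξ, ‖ρ ξ‖ = 1)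
    (hint : Integrable (fun ξ : ℝ => ξ) ν) (hX : IsSelfAdjoint X) (Y : A) :
    Integrable (fun ξ => ρ ξ • duexp ξ X Y) ν := by
  simp only [smul_duexp]
  exact (integrable_dfmu_integrand hρm hρ1 hint hX Y).integral_prod_right

lemma fmu_add_sub_fmu_sub_dfmu [IsFiniteMeasure ν] (hρm : Measurable ρ)
    (hρ1 : ∀ ξ, ‖ρ ξ‖ = 1) (hint : Integrable (fun ξ : ℝ => ξ) ν) (hX : IsSelfAdjoint X)
    (hY : IsSelfAdjoint Y) :
    fmu ν ρ (X + Y) - fmu ν ρ X - dfmu ν ρ X Y =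
      ∫ ξ, ρ ξ • (uexp ξ (X + Y) - uexp ξ X - duexp ξ X Y) ∂ν := by
  have h₁ : Integrable (fun ξ => ρ ξ • uexp ξ (X + Y)) ν :=
    integrable_smul_uexp hρm hρ1 (hX.add hY)
  have h₂ : Integrable (fun ξ => ρ ξ • uexp ξ X) ν := integrable_smul_uexp hρm hρ1 hX
  simp only [smul_sub]
  rw [fmu, fmu, dfmu_eq_integral_smul_duexp hρm hρ1 hint hX Y, ← integral_sub h₁ h₂]
  exact (integral_sub (h₁.sub h₂) (integrable_smul_duexp hρm hρ1 hint hX Y)).symm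

lemma norm_fmu_add_sub_fmu_sub_dfmu_le [IsFiniteMeasure ν] (hρm : Measurable ρ)
    (hρ1 : ∀ ξ, ‖ρ ξ‖ = 1) (hint : Integrable (fun ξ : ℝ => ξ) ν) (hX : IsSelfAdjoint X)
    (hY : IsSelfAdjoint Y) :
    ‖fmu ν ρ (X + Y) - fmu ν ρ X - dfmu ν ρ X Y‖ ≤
      (∫ ξ, |ξ| * min 2 (|ξ| * ‖Y‖) ∂ν) * ‖Y‖ := by
  rw [fmu_add_sub_fmu_sub_dfmu hρm hρ1 hint hX hY, ← integral_mul_const]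
  refine norm_integral_le_of_norm_le ((integrable_abs_mul_min hint (norm_nonneg Y)).mul_const _)
    (ae_of_all _ fun ξ => ?_)
  rw [norm_smul, hρ1, one_mul]
  exact norm_uexp_add_sub_uexp_sub_duexp_le hX hY ξ

end Integral

/-- Propositions 3.1 and 3.2: first derivative formula. Let `A` be a
unital C*-algebra over `ℂ` and `μ` a finite complex Borel measure on `ℝ` (given by its
total variation `ν` and unimodular density `ρ`) with `∫ (1 + |ξ|) d|μ|(ξ) < ∞`. Then
`X ↦ f_μ(X)`, as a map from the real Banach space of self-adjoint elements of `A` to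
`A`, is Fréchet differentiable at every self-adjoint `X`, with derivative
`Y ↦ df_μ(X)(Y) = ∫₀¹ ∫_ℝ iξ exp(iαξX) Y exp(i(1−α)ξX) dμ(ξ) dα`
(Fréchet differentiability is spelled out as the first-order Taylor estimate along
self-adjoint directions). -/
theorem fmu_frechet_differentiable {A : Type*} [CStarAlgebra A]
    (ν : Measure ℝ) [IsFiniteMeasure ν]
    (ρ : ℝ → ℂ) (hρm : Measurable ρ) (hρ1 : ∀ ξ, ‖ρ ξ‖ = 1)
    (hint : Integrable (fun ξ : ℝ => ξ) ν)
    (X : A) (hX : IsSelfAdjoint X) :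
    ∀ ε > (0 : ℝ), ∃ δ > (0 : ℝ), ∀ Y : A, IsSelfAdjoint Y → ‖Y‖ ≤ δ →
      ‖fmu ν ρ (X + Y) - fmu ν ρ X - dfmu ν ρ X Y‖ ≤ ε * ‖Y‖ := by
  intro ε hε
  obtain ⟨u, hu, hsmall⟩ := mem_nhdsGE_iff_exists_Ico_subset.1
    ((tendsto_integral_abs_mul_min hint).eventually (eventually_lt_nhds hε))
  refine ⟨u / 2, half_pos hu, fun Y hY hYu => ?_⟩
  have hmod : ∫ ξ, |ξ| * min 2 (|ξ| * ‖Y‖) ∂ν < ε :=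
    hsmall ⟨norm_nonneg Y, hYu.trans_lt (half_lt_self hu)⟩
  calc ‖fmu ν ρ (X + Y) - fmu ν ρ X - dfmu ν ρ X Y‖
      ≤ (∫ ξ, |ξ| * min 2 (|ξ| * ‖Y‖) ∂ν) * ‖Y‖ :=
        norm_fmu_add_sub_fmu_sub_dfmu_le hρm hρ1 hint hX hY
    _ ≤ ε * ‖Y‖ := by gcongr
end

section
/- (Lemma 5.3.) Let V be a Banach space, T > 0, and X : [0,T] → V a 1/2-Hölder path, i.e. there is K ≥ 0 with ‖X_t − X_s‖ ≤ K|t−s|^{1/2} for all s, t. For a partition D = {0 = t_0 < t_1 < … < t_k = T} of [0,T], let X^D denote the piecewise-linear interpolation of X along D, i.e. X^D_t := X_{t_i} + ((t − t_i)/(t_{i+1} − t_i))(X_{t_{i+1}} − X_{t_i}) for t ∈ [t_i, t_{i+1}], and let |D| := max_i (t_{i+1} − t_i) be its mesh. Then for every ε ∈ (0, 1/2) there exists a constant c (depending only on ε) such that for every partition D and all 0 ≤ s < t ≤ T, both ‖X^D_t − X^D_s‖ ≤ cK|t−s|^{1/2} and ‖(X^D_t − X_t) − (X^D_s − X_s)‖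 ≤ cK·|D|^ε·|t−s|^{1/2−ε}. -/
universe u

set_option maxHeartbeats 2000000 in
/-- Lemma 5.3. For every `ε ∈ (0, 1/2)` there is a constant `c`
(depending only on `ε`) such that: for every Banach space `V`, every `T > 0`, every
`1/2`-Hölder path `X : [0,T] → V` with Hölder constant `K`, and every partition
`D = {0 = t₀ < t₁ < ⋯ < t_k = T}` of `[0,T]` with mesh `|D| = max_i (t_{i+1} − t_i)`,
the piecewise-linear interpolation `X^D` of `X` along `D` satisfies, for all
`0 ≤ s < t ≤ T`, both `‖X^D_t − X^D_s‖ ≤ c K |t−s|^{1/2}` and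
`‖(X^D_t − X_t) − (X^D_s − X_s)‖ ≤ c K |D|^ε |t−s|^{1/2−ε}`. -/
theorem linear_interpolation_holder_bounds :
    ∀ ε : ℝ, 0 < ε → ε < 1 / 2 →
    ∃ c : ℝ,
      ∀ (V : Type u) [NormedAddCommGroup V] [NormedSpace ℝ V] [CompleteSpace V],
        ∀ (T : ℝ), 0 < T →
        ∀ (X : ℝ → V) (K : ℝ), 0 ≤ K →
        (∀ s t : ℝ, s ∈ Set.Icc (0 : ℝ) T → t ∈ Set.Icc (0 : ℝ) T →
          ‖X t - X s‖ ≤ K * |t - s| ^ ((1 : ℝ) / 2)) →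
        ∀ (k : ℕ) (pt : ℕ → ℝ), 0 < k → pt 0 = 0 → pt k = T →
        (∀ i < k, pt i < pt (i + 1)) →
        ∀ XD : ℝ → V,
        -- `X^D` is the piecewise-linear interpolation of `X` along the partition:
        (∀ i < k, ∀ u ∈ Set.Icc (pt i) (pt (i + 1)),
          XD u = X (pt i) +
            ((u - pt i) / (pt (i + 1) - pt i)) • (X (pt (i + 1)) - X (pt i))) →
        -- `m` is the mesh `|D| = max_i (t_{i+1} − t_i)`:
        ∀ m : ℝ, IsGreatest {r : ℝ | ∃ i < k, r = pt (i + 1) - pt i} m →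
        ∀ s t : ℝ, 0 ≤ s → s < t → t ≤ T →
          ‖XD t - XD s‖ ≤ c * K * |t - s| ^ ((1 : ℝ) / 2) ∧
          ‖(XD t - X t) - (XD s - X s)‖ ≤
            c * K * m ^ ε * |t - s| ^ ((1 : ℝ) / 2 - ε) := by
  intro ε hε hε2
  refine ⟨8, ?_⟩
  intro V _ _ _ T hT X K hK hX k pt hk hpt0 hptk hlt XD hXD m hm s t hs hst ht
  classical
  -- monotonicity of the partition
  have hmono : ∀ i j : ℕ, i ≤ j → j ≤ k → pt i ≤ pt j := by
    intro i j hij hjk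
    induction j, hij using Nat.le_induction with
    | base => exact le_rfl
    | succ n hn ih =>
      exact (ih (by omega)).trans (hlt n (by omega)).le
  have hptmem : ∀ i, i ≤ k → pt i ∈ Set.Icc (0 : ℝ) T := by
    intro i hi
    exact ⟨hpt0 ▸ hmono 0 i (Nat.zero_le i) hi, hptk ▸ hmono i k hi le_rfl⟩
  have hmesh : ∀ i, i < k → pt (i + 1) - pt i ≤ m := fun i hi => hm.2 ⟨i, hi, rfl⟩
  have hmpos : 0 < m := by
    obtain ⟨i0, hi0, e0⟩ := hm.1
    have := hlt i0 hi0
    linarith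
  -- location of a point in the partition
  have hloc : ∀ u, 0 ≤ u → u ≤ T → ∃ i, i < k ∧ pt i ≤ u ∧ u ≤ pt (i + 1) := by
    intro u hu huT
    by_cases hTu : u = T
    · have e : k - 1 + 1 = k := Nat.succ_pred_eq_of_pos hk
      refine ⟨k - 1, by omega, ?_, ?_⟩
      · rw [hTu, ← hptk]; exact hmono (k - 1) k (by omega) le_rfl
      · rw [hTu, ← hptk, e]
    · set i := Nat.findGreatest (fun n => pt n ≤ u) k with hi
      have h0 : pt 0 ≤ u := by rw [hpt0]; exact hu
      have hik : i ≤ k := Nat.findGreatest_le k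
      have hspec : pt i ≤ u :=
        Nat.findGreatest_spec (P := fun n => pt n ≤ u) (Nat.zero_le k) h0
      have hikk : i < k := by
        rcases lt_or_eq_of_le hik with h | h
        · exact h
        · exfalso
          have : pt k ≤ u := h ▸ hspec
          rw [hptk] at this
          exact hTu (le_antisymm huT this)
      have hnext : u ≤ pt (i + 1) := by
        by_contra hcon
        push_neg at hcon
        exact Nat.findGreatest_is_greatest (Nat.lt_succ_self i) (by omega) hcon.le
      exact ⟨i, hikk, hspec, hnext⟩
  -- XD agrees with X at partition points
  have hXDpt : ∀ i, i ≤ k → XD (pt i) = X (pt i) := by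
    intro i hi
    rcases lt_or_eq_of_le hi with h | h
    · rw [hXD i h (pt i) ⟨le_rfl, (hlt i h).le⟩]
      simp
    · subst h
      have e : i - 1 + 1 = i := Nat.succ_pred_eq_of_pos hk
      have h1 : i - 1 < i := by omega
      have hd : 0 < pt (i - 1 + 1) - pt (i - 1) := sub_pos.mpr (hlt (i - 1) (by omega))
      have := hXD (i - 1) (by omega) (pt i) ⟨by rw [← e]; exact (hlt (i-1) (by omega)).le, by rw [e]⟩
      rw [this]
      rw [show pt i - pt (i - 1) = pt (i - 1 + 1) - pt (i - 1) by rw [e]]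
      rw [div_self hd.ne', one_smul, e]
      abel
  have hrm : ∀ a b : ℝ, 0 ≤ a → a ≤ b → a ^ ((1:ℝ)/2) ≤ b ^ ((1:ℝ)/2) := by
    intro a b ha hab
    exact Real.rpow_le_rpow ha hab (by norm_num)
  -- single interval bound
  have hC : ∀ i, i < k → ∀ s' t', pt i ≤ s' → s' ≤ t' → t' ≤ pt (i + 1) →
      ‖XD t' - XD s'‖ ≤ K * (t' - s') ^ ((1:ℝ)/2) := by
    intro i hi s' t' h1 h2 h3
    have hΔpos : 0 < pt (i + 1) - pt i := sub_pos.mpr (hlt i hi)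
    rw [hXD i hi t' ⟨h1.trans h2, h3⟩, hXD i hi s' ⟨h1, h2.trans h3⟩]
    have e : (X (pt i) + ((t' - pt i) / (pt (i+1) - pt i)) • (X (pt (i+1)) - X (pt i)))
        - (X (pt i) + ((s' - pt i) / (pt (i+1) - pt i)) • (X (pt (i+1)) - X (pt i)))
        = ((t' - s') / (pt (i+1) - pt i)) • (X (pt (i+1)) - X (pt i)) := by
      rw [show (t' - s') / (pt (i+1) - pt i)
          = (t' - pt i) / (pt (i+1) - pt i) - (s' - pt i) / (pt (i+1) - pt i) by ring,
        sub_smul]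
      abel
    rw [e, norm_smul, Real.norm_eq_abs,
      abs_of_nonneg (div_nonneg (sub_nonneg.mpr h2) hΔpos.le)]
    have hXb : ‖X (pt (i+1)) - X (pt i)‖ ≤ K * (pt (i+1) - pt i) ^ ((1:ℝ)/2) := by
      have := hX (pt i) (pt (i+1)) (hptmem i (by omega)) (hptmem (i+1) (by omega))
      rwa [abs_of_pos hΔpos] at this
    set a := t' - s' with ha
    set Δ := pt (i + 1) - pt i with hΔ
    have haΔ : a ≤ Δ := by simp only [ha, hΔ]; linarith
    have ha0 : 0 ≤ a := sub_nonneg.mpr h2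
    have hp : a ^ ((1:ℝ)/2) * a ^ ((1:ℝ)/2) = a := by
      rw [← Real.rpow_add' ha0 (by norm_num)]; norm_num
    have hq : Δ ^ ((1:ℝ)/2) * Δ ^ ((1:ℝ)/2) = Δ := by
      rw [← Real.rpow_add' hΔpos.le (by norm_num)]; norm_num
    have hpq : a ^ ((1:ℝ)/2) ≤ Δ ^ ((1:ℝ)/2) := hrm a Δ ha0 haΔ
    have hp0 : 0 ≤ a ^ ((1:ℝ)/2) := Real.rpow_nonneg ha0 _
    have hq0 : 0 ≤ Δ ^ ((1:ℝ)/2) := Real.rpow_nonneg hΔpos.le _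
    calc a / Δ * ‖X (pt (i+1)) - X (pt i)‖
        ≤ a / Δ * (K * Δ ^ ((1:ℝ)/2)) := by
          apply mul_le_mul_of_nonneg_left hXb (div_nonneg ha0 hΔpos.le)
      _ ≤ K * a ^ ((1:ℝ)/2) := by
          have key : a * Δ ^ ((1:ℝ)/2) ≤ a ^ ((1:ℝ)/2) * Δ := by
            nlinarith [mul_le_mul_of_nonneg_left hpq (mul_nonneg hp0 hq0)]
          rw [div_mul_eq_mul_div, div_le_iff₀ hΔpos]
          nlinarith [mul_le_mul_of_nonneg_left key hK]
  -- global Hölder bound for XD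
  have hD : ∀ s' t', 0 ≤ s' → s' ≤ t' → t' ≤ T →
      ‖XD t' - XD s'‖ ≤ 3 * K * (t' - s') ^ ((1:ℝ)/2) := by
    intro s' t' h0 h1 h2
    obtain ⟨i, hi, hi1, hi2⟩ := hloc s' h0 (h1.trans h2)
    obtain ⟨j, hj, hj1, hj2⟩ := hloc t' (h0.trans h1) h2
    have hts0 : (0:ℝ) ≤ t' - s' := sub_nonneg.mpr h1
    have hr0 : (0:ℝ) ≤ (t' - s') ^ ((1:ℝ)/2) := Real.rpow_nonneg hts0 _
    by_cases hcase : t' ≤ pt (i + 1)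
    · have := hC i hi s' t' hi1 h1 hcase
      nlinarith
    · push_neg at hcase
      have hij : i + 1 ≤ j := by
        by_contra hcon
        push_neg at hcon
        have : pt (j + 1) ≤ pt (i + 1) := hmono (j+1) (i+1) (by omega) (by omega)
        linarith
      have key1 : pt (i + 1) ≤ pt j := hmono (i+1) j hij hj.le
      have hs'le : s' ≤ pt j := hi2.trans key1
      have tri : ‖XD t' - XD s'‖ ≤ ‖XD t' - XD (pt j)‖ + ‖XD (pt j) - XD (pt (i+1))‖
          + ‖XD (pt (i+1)) - XD s'‖ := by
        have e : XD t' - XD s' = (XD t' - XD (pt j)) + (XD (pt j) - XD (pt (i+1)))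
            + (XD (pt (i+1)) - XD s') := by abel
        rw [e]
        exact norm_add₃_le
      have t1 : ‖XD t' - XD (pt j)‖ ≤ K * (t' - s') ^ ((1:ℝ)/2) := by
        refine (hC j hj (pt j) t' le_rfl hj1 hj2).trans ?_
        exact mul_le_mul_of_nonneg_left (hrm _ _ (by linarith) (by linarith)) hK
      have t2 : ‖XD (pt j) - XD (pt (i+1))‖ ≤ K * (t' - s') ^ ((1:ℝ)/2) := by
        rw [hXDpt j hj.le, hXDpt (i+1) (by omega)]
        refine (hX (pt (i+1)) (pt j) (hptmem (i+1) (by omega)) (hptmem j hj.le)).trans ?_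
        refine mul_le_mul_of_nonneg_left ?_ hK
        rw [abs_of_nonneg (by linarith)]
        exact hrm _ _ (by linarith) (by linarith)
      have t3 : ‖XD (pt (i+1)) - XD s'‖ ≤ K * (t' - s') ^ ((1:ℝ)/2) := by
        refine (hC i hi s' (pt (i+1)) hi1 hi2 le_rfl).trans ?_
        exact mul_le_mul_of_nonneg_left (hrm _ _ (by linarith) (by linarith)) hK
      linarith
  have hstpos : 0 < t - s := sub_pos.mpr hst
  have habs : |t - s| = t - s := abs_of_pos hstpos
  have hr0 : (0:ℝ) ≤ (t - s) ^ ((1:ℝ)/2) := Real.rpow_nonneg hstpos.le _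
  constructor
  · -- first bound
    have := hD s t hs hst.le ht
    rw [habs]
    have hKr : 0 ≤ K * (t - s) ^ ((1:ℝ)/2) := mul_nonneg hK hr0
    nlinarith
  · -- second bound
    rw [habs]
    have hYpt : ∀ u, 0 ≤ u → u ≤ T → ‖XD u - X u‖ ≤ 4 * K * m ^ ((1:ℝ)/2) := by
      intro u hu huT
      obtain ⟨i, hi, h1, h2⟩ := hloc u hu huT
      have hpti0 : (0:ℝ) ≤ pt i := (hptmem i hi.le).1
      have e0 : XD (pt i) = X (pt i) := hXDpt i hi.le
      have hXDb := hD (pt i) u hpti0 h1 huT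
      have hXb : ‖X u - X (pt i)‖ ≤ K * (u - pt i) ^ ((1:ℝ)/2) := by
        have := hX (pt i) u (hptmem i hi.le) ⟨hu, huT⟩
        rwa [abs_of_nonneg (by linarith)] at this
      have e : XD u - X u = (XD u - XD (pt i)) - (X u - X (pt i)) := by
        rw [e0]; abel
      have hum : u - pt i ≤ m := le_trans (by linarith) (hmesh i hi)
      have hmr : (u - pt i) ^ ((1:ℝ)/2) ≤ m ^ ((1:ℝ)/2) := hrm _ _ (by linarith) hum
      calc ‖XD u - X u‖ ≤ ‖XD u - XD (pt i)‖ + ‖X u - X (pt i)‖ := by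
            rw [e]; exact norm_sub_le _ _
        _ ≤ 3 * K * (u - pt i) ^ ((1:ℝ)/2) + K * (u - pt i) ^ ((1:ℝ)/2) := by linarith
        _ = 4 * K * (u - pt i) ^ ((1:ℝ)/2) := by ring
        _ ≤ 4 * K * m ^ ((1:ℝ)/2) :=
            mul_le_mul_of_nonneg_left hmr (by linarith)
    have hYholder : ‖(XD t - X t) - (XD s - X s)‖ ≤ 4 * K * (t - s) ^ ((1:ℝ)/2) := by
      have h1 := hD s t hs hst.le ht
      have h2 : ‖X t - X s‖ ≤ K * (t - s) ^ ((1:ℝ)/2) := by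
        have := hX s t ⟨hs, by linarith⟩ ⟨by linarith, ht⟩
        rwa [habs] at this
      have e : (XD t - X t) - (XD s - X s) = (XD t - XD s) - (X t - X s) := by abel
      calc ‖(XD t - X t) - (XD s - X s)‖ ≤ ‖XD t - XD s‖ + ‖X t - X s‖ := by
            rw [e]; exact norm_sub_le _ _
        _ ≤ 4 * K * (t - s) ^ ((1:ℝ)/2) := by linarith
    have hmε0 : (0:ℝ) ≤ m ^ ε := Real.rpow_nonneg hmpos.le _
    have hr20 : (0:ℝ) ≤ (t - s) ^ ((1:ℝ)/2 - ε) := Real.rpow_nonneg hstpos.le _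
    by_cases hcm : t - s ≤ m
    · have split : (t - s) ^ ((1:ℝ)/2) = (t - s) ^ ε * (t - s) ^ ((1:ℝ)/2 - ε) := by
        rw [← Real.rpow_add hstpos]; congr 1; ring
      have hmε : (t - s) ^ ε ≤ m ^ ε := Real.rpow_le_rpow hstpos.le hcm hε.le
      calc ‖(XD t - X t) - (XD s - X s)‖ ≤ 4 * K * (t - s) ^ ((1:ℝ)/2) := hYholder
        _ = 4 * K * ((t - s) ^ ε * (t - s) ^ ((1:ℝ)/2 - ε)) := by rw [split]
        _ ≤ 4 * K * (m ^ ε * (t - s) ^ ((1:ℝ)/2 - ε)) :=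
            mul_le_mul_of_nonneg_left
              (mul_le_mul_of_nonneg_right hmε hr20) (by linarith)
        _ ≤ 8 * K * m ^ ε * (t - s) ^ ((1:ℝ)/2 - ε) := by
            have h2 : 0 ≤ m ^ ε * (t - s) ^ ((1:ℝ)/2 - ε) := mul_nonneg hmε0 hr20
            nlinarith [mul_nonneg hK h2]
    · push_neg at hcm
      have split : m ^ ((1:ℝ)/2) = m ^ ε * m ^ ((1:ℝ)/2 - ε) := by
        rw [← Real.rpow_add hmpos]; congr 1; ring
      have hmε : m ^ ((1:ℝ)/2 - ε) ≤ (t - s) ^ ((1:ℝ)/2 - ε) :=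
        Real.rpow_le_rpow hmpos.le hcm.le (by linarith)
      have hYt := hYpt t (by linarith) ht
      have hYs := hYpt s hs (by linarith)
      have hm12 : (0:ℝ) ≤ m ^ ((1:ℝ)/2 - ε) := Real.rpow_nonneg hmpos.le _
      calc ‖(XD t - X t) - (XD s - X s)‖ ≤ ‖XD t - X t‖ + ‖XD s - X s‖ := norm_sub_le _ _
        _ ≤ 8 * K * m ^ ((1:ℝ)/2) := by linarith
        _ = 8 * K * (m ^ ε * m ^ ((1:ℝ)/2 - ε)) := by rw [split]
        _ = 8 * K * m ^ ε * m ^ ((1:ℝ)/2 - ε) := by ring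
        _ ≤ 8 * K * m ^ ε * (t - s) ^ ((1:ℝ)/2 - ε) :=
            mul_le_mul_of_nonneg_left hmε
              (by positivity)
end
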